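/- arXiv:2304.05125 — 4 statements merged into one kernel-verified Lean document; each statement's English description precedes it below -/
import Mathlib

section
/- (Failure of secrecy of Protocol 1 for superposition inputs when the server's measurement is skipped.) With U as in Protocol 1 and |+_{m}⟩ = (1/√m)∑_{j=0}^{m−1}|j⟩, let ψ_k = U(|k⟩ ⊗ |0⟩ ⊗ |+_{d_1}⟩ ⊗ ⋯ ⊗ |+_{d_f}⟩) for k ∈ [f]. Then the reduced density matrix of |ψ_k⟩⟨ψ_k| on the k-th message system ℂ^{d_k} is the maximally mixed state (1/d_k)·I_{d_k}, while for every ℓ ≠ k the reduced density matrix on ℂ^{d_ℓ} equals the pure state |+_{d_ℓ}⟩⟨+_{d_ℓ}|. In particular, if k ≠ k' and d_k ≥ 2, the reduced state of ψ_k on ℂ^{d_1} ⊗ ⋯ ⊗ ℂ^{d_f} differs from that of ψ_{k'}, so the final-state secrecy condition fails. -/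
open Matrix

/-- Outer product `|v⟩⟨v|` of a vector. -/
noncomputable def outerProd {ι : Type*} (v : ι → ℂ) : Matrix ι ι ℂ :=
  Matrix.of fun p q => v p * (starRingEnd ℂ) (v q)

/-- Partial trace over the first tensor factor. -/
noncomputable def ptraceFst {α β : Type*} [Fintype α] (M : Matrix (α × β) (α × β) ℂ) :
    Matrix β β ℂ :=
  Matrix.of fun k l => ∑ i : α, M (i, k) (i, l)

/-- The controlled unitary `U = ∑_ℓ |ℓ⟩⟨ℓ| ⊗ U_ℓ` of Protocol 1, acting on
`ℂ^f ⊗ ℂ^d ⊗ ℂ^{d_1} ⊗ ⋯ ⊗ ℂ^{d_f}`, where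
`U_ℓ = ∑_{j',j} |j+j' mod d⟩⟨j'| ⊗ |j⟩⟨j|` acts on `ℂ^d ⊗ ℂ^{d_ℓ}` (extended by the
identity elsewhere). -/
noncomputable def Uprot (f d : ℕ) (dd : Fin f → ℕ) :
    Matrix ((Fin f × Fin d) × (∀ ℓ, Fin (dd ℓ))) ((Fin f × Fin d) × (∀ ℓ, Fin (dd ℓ))) ℂ :=
  Matrix.of fun p q =>
    if p.1.1 = q.1.1 ∧ p.2 = q.2 ∧ (p.1.2 : ℕ) = ((q.2 q.1.1 : ℕ) + (q.1.2 : ℕ)) % d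
    then 1 else 0

/-- `ψ_k = U(|k⟩ ⊗ |0⟩ ⊗ |+_{d_1}⟩ ⊗ ⋯ ⊗ |+_{d_f}⟩)`. -/
noncomputable def psiPlus (f d : ℕ) (hd : 0 < d) (dd : Fin f → ℕ) (k : Fin f) :
    (Fin f × Fin d) × (∀ ℓ, Fin (dd ℓ)) → ℂ :=
  (Uprot f d dd).mulVec fun p =>
    if p.1.1 = k ∧ p.1.2 = ⟨0, hd⟩ then ∏ ℓ, (((Real.sqrt (dd ℓ))⁻¹ : ℝ) : ℂ) else 0

/-- Reduced density matrix on the `ℓ`-th message system `ℂ^{d_ℓ}` (partial trace over all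
other tensor factors). -/
noncomputable def margAt (f d : ℕ) (dd : Fin f → ℕ) (ℓ : Fin f)
    (M : Matrix ((Fin f × Fin d) × (∀ j, Fin (dd j))) ((Fin f × Fin d) × (∀ j, Fin (dd j))) ℂ) :
    Matrix (Fin (dd ℓ)) (Fin (dd ℓ)) ℂ :=
  Matrix.of fun m m' =>
    ∑ a : Fin f × Fin d, ∑ z : ∀ j : {j : Fin f // j ≠ ℓ}, Fin (dd j),
      M (a, (Equiv.piSplitAt ℓ (fun j => Fin (dd j))).symm (m, z))
        (a, (Equiv.piSplitAt ℓ (fun j => Fin (dd j))).symm (m', z))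

/-!
`U` maps `|k⟩|0⟩|z⟩` to `|k⟩|z_k⟩|z⟩`, so `ψ_k = c ∑_z |k⟩|z_k⟩|z⟩` with `|c|² = ∏ 1/d_ℓ`: the
register `ℂ^d` ends up holding a copy of `z_k`. Tracing it out leaves the message systems in the
state with entries `|c|² [z_k = z'_k]`, in which the coordinate `z_k` is completely dephased while
all the others keep their uniform superposition.
-/

lemma sum_ite_eq_mul_ite_eq {α R : Type*} [Fintype α] [DecidableEq α]
    [NonUnitalNonAssocSemiring R] (e e' : α) (x y : R) :
    ∑ a, (if a = e then x else 0) * (if a = e' then y else 0) = if e = e' then x * y else 0 := by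
  simp [ite_mul, eq_comm]

lemma prod_inv_sqrt_mul_conj {ι : Type*} [Fintype ι] (n : ι → ℕ) :
    (∏ i, (((Real.sqrt (n i))⁻¹ : ℝ) : ℂ)) * starRingEnd ℂ (∏ i, (((Real.sqrt (n i))⁻¹ : ℝ) : ℂ))
      = ∏ i, ((n i : ℂ))⁻¹ := by
  rw [map_prod, ← Finset.prod_mul_distrib]
  refine Finset.prod_congr rfl fun i _ => ?_
  rw [Complex.conj_ofReal, ← Complex.ofReal_mul, ← mul_inv, Real.mul_self_sqrt (Nat.cast_nonneg _)]
  push_cast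
  rfl

lemma sum_pi_compl_prod_inv {ι : Type*} [Fintype ι] [DecidableEq ι] {n : ι → ℕ}
    (hn : ∀ i, 0 < n i) (i : ι) :
    ∑ _z : ∀ j : {j // j ≠ i}, Fin (n j), ∏ j, ((n j : ℂ))⁻¹ = ((n i : ℂ))⁻¹ := by
  have hne : ∀ j, (n j : ℂ) ≠ 0 := fun j => Nat.cast_ne_zero.2 (hn j).ne'
  rw [Finset.sum_const, Finset.card_univ, Fintype.card_pi, nsmul_eq_mul, Finset.prod_inv_distrib,
    Fintype.prod_eq_mul_prod_subtype_ne _ i]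
  simp only [Fintype.card_fin, Nat.cast_prod]
  have : ∏ j : {j // j ≠ i}, (n j : ℂ) ≠ 0 := Finset.prod_ne_zero_iff.2 fun j _ => hne j
  field_simp

section

variable {f d : ℕ} {dd : Fin f → ℕ}

lemma psiPlus_apply (hd : 0 < d) (hdle : ∀ ℓ, dd ℓ ≤ d) (k : Fin f)
    (a : Fin f × Fin d) (z : ∀ ℓ, Fin (dd ℓ)) :
    psiPlus f d hd dd k (a, z) =
      if a = (k, Fin.castLE (hdle k) (z k)) then ∏ ℓ, (((Real.sqrt (dd ℓ))⁻¹ : ℝ) : ℂ)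
      else 0 := by
  simp only [psiPlus, mulVec, dotProduct]
  rw [Finset.sum_eq_single ((k, ⟨0, hd⟩), z)]
  · have hmod : (z k : ℕ) % d = z k := Nat.mod_eq_of_lt ((z k).isLt.trans_le (hdle k))
    simp [Uprot, hmod, Prod.ext_iff, Fin.ext_iff]
  · rintro ⟨⟨ℓ, j⟩, z'⟩ - hne
    by_cases h : ℓ = k ∧ j = ⟨0, hd⟩
    · obtain ⟨rfl, rfl⟩ := h
      have hz : z ≠ z' := fun h => hne (by rw [h])
      simp [Uprot, hz]
    · simp [h]
  · simp

lemma ptraceFst_outerProd_psiPlus (hd : 0 < d) (hdle : ∀ ℓ, dd ℓ ≤ d) (k : Fin f)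
    (z z' : ∀ ℓ, Fin (dd ℓ)) :
    ptraceFst (outerProd (psiPlus f d hd dd k)) z z'
      = if z k = z' k then ∏ ℓ, ((dd ℓ : ℂ))⁻¹ else 0 := by
  simp only [ptraceFst, outerProd, of_apply, psiPlus_apply hd hdle, apply_ite (starRingEnd ℂ),
    map_zero]
  rw [sum_ite_eq_mul_ite_eq, prod_inv_sqrt_mul_conj]
  simp

lemma margAt_apply (ℓ : Fin f) (M : Matrix ((Fin f × Fin d) × (∀ j, Fin (dd j)))
      ((Fin f × Fin d) × (∀ j, Fin (dd j))) ℂ) (m m' : Fin (dd ℓ)) :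
    margAt f d dd ℓ M m m' = ∑ z, ptraceFst M ((Equiv.piSplitAt ℓ _).symm (m, z))
      ((Equiv.piSplitAt ℓ _).symm (m', z)) :=
  Finset.sum_comm

lemma margAt_outerProd_psiPlus_self (hd : 0 < d) (hdd : ∀ ℓ, 0 < dd ℓ) (hdle : ∀ ℓ, dd ℓ ≤ d)
    (k : Fin f) :
    margAt f d dd k (outerProd (psiPlus f d hd dd k)) = ((dd k : ℂ))⁻¹ • (1 : Matrix _ _ ℂ) := by
  ext m m'
  simp only [margAt_apply, ptraceFst_outerProd_psiPlus hd hdle, Equiv.piSplitAt_symm_apply,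
    dif_pos, Matrix.smul_apply, one_apply, smul_eq_mul]
  split_ifs
  · rw [sum_pi_compl_prod_inv hdd, mul_one]
  · simp

lemma margAt_outerProd_psiPlus_of_ne (hd : 0 < d) (hdd : ∀ ℓ, 0 < dd ℓ)
    (hdle : ∀ ℓ, dd ℓ ≤ d) {k ℓ : Fin f} (hℓk : ℓ ≠ k) :
    margAt f d dd ℓ (outerProd (psiPlus f d hd dd k)) = of fun _ _ => ((dd ℓ : ℂ))⁻¹ := by
  ext m m'
  simp only [margAt_apply, ptraceFst_outerProd_psiPlus hd hdle, Equiv.piSplitAt_symm_apply,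
    dif_neg hℓk.symm, if_true, of_apply, sum_pi_compl_prod_inv hdd]

lemma ptraceFst_outerProd_psiPlus_ne (hd : 0 < d) (hdd : ∀ ℓ, 0 < dd ℓ)
    (hdle : ∀ ℓ, dd ℓ ≤ d) {k k' : Fin f} (hkk' : k ≠ k') (hk : 2 ≤ dd k) :
    ptraceFst (outerProd (psiPlus f d hd dd k)) ≠ ptraceFst (outerProd (psiPlus f d hd dd k')) := by
  intro h
  let z : ∀ ℓ, Fin (dd ℓ) := fun ℓ => ⟨0, hdd ℓ⟩
  let z' := Function.update z k ⟨1, hk⟩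
  have hzk : z k ≠ z' k := by simp [z, z']
  have hzk' : z k' = z' k' := by simp [z', Function.update_of_ne hkk'.symm]
  have hentry := congrFun (congrFun h z) z'
  rw [ptraceFst_outerProd_psiPlus hd hdle, ptraceFst_outerProd_psiPlus hd hdle, if_neg hzk,
    if_pos hzk'] at hentry
  exact Finset.prod_ne_zero_iff.2 (fun ℓ _ => inv_ne_zero (Nat.cast_ne_zero.2 (hdd ℓ).ne'))
    hentry.symm

end

theorem protocol1_superposition_insecure_general (f d : ℕ) (hd : 0 < d)
    (dd : Fin f → ℕ) (hdd : ∀ ℓ, 0 < dd ℓ) (hdle : ∀ ℓ, dd ℓ ≤ d) :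
    (∀ k : Fin f,
      margAt f d dd k (outerProd (psiPlus f d hd dd k))
        = (((dd k : ℂ))⁻¹) • (1 : Matrix (Fin (dd k)) (Fin (dd k)) ℂ)) ∧
    (∀ k ℓ : Fin f, ℓ ≠ k →
      margAt f d dd ℓ (outerProd (psiPlus f d hd dd k))
        = Matrix.of fun _ _ => ((dd ℓ : ℂ))⁻¹) ∧
    (∀ k k' : Fin f, k ≠ k' → 2 ≤ dd k →
      ptraceFst (outerProd (psiPlus f d hd dd k))
        ≠ ptraceFst (outerProd (psiPlus f d hd dd k'))) :=
  ⟨margAt_outerProd_psiPlus_self hd hdd hdle,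
    fun _ _ hℓk => margAt_outerProd_psiPlus_of_ne hd hdd hdle hℓk,
    fun _ _ hkk' hk => ptraceFst_outerProd_psiPlus_ne hd hdd hdle hkk' hk⟩

/-- Failure of secrecy of Protocol 1 for superposition inputs when the server's
measurement is skipped: the reduced state of `ψ_k` on the `k`-th message system is
maximally mixed, while on every other message system it is the pure state `|+⟩⟨+|`;
hence for `k ≠ k'` with `d_k ≥ 2` the server's reduced final states differ. -/
theorem protocol1_superposition_insecure (f d : ℕ) (hf : 1 ≤ f) (hd : 0 < d)
    (dd : Fin f → ℕ) (hdd : ∀ ℓ, 0 < dd ℓ) (hdle : ∀ ℓ, dd ℓ ≤ d) :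
    (∀ k : Fin f,
      margAt f d dd k (outerProd (psiPlus f d hd dd k))
        = (((dd k : ℂ))⁻¹) • (1 : Matrix (Fin (dd k)) (Fin (dd k)) ℂ)) ∧
    (∀ k ℓ : Fin f, ℓ ≠ k →
      margAt f d dd ℓ (outerProd (psiPlus f d hd dd k))
        = Matrix.of fun _ _ => ((dd ℓ : ℂ))⁻¹) ∧
    (∀ k k' : Fin f, k ≠ k' → 2 ≤ dd k →
      ptraceFst (outerProd (psiPlus f d hd dd k))
        ≠ ptraceFst (outerProd (psiPlus f d hd dd k'))) :=
  protocol1_superposition_insecure_general f d hd dd hdd hdle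
end

section
/- (Correctness and honest-server final-state secrecy of Protocol 2.) Fix f ≥ 1, positive integers d₁,…,d_f ≤ d, and ω_f = exp(2πi/f). Let U^{(0)} denote the controlled unitary U of Protocol 1 acting on K₀ ⊗ H₀' ⊗ H₁ ⊗ ⋯ ⊗ H_f (with K₀ = ℂ^f the control and H₀' = ℂ^d the target) extended by the identity elsewhere, and U^{(1)} the same operator acting on K₁ ⊗ H₁' ⊗ H₁ ⊗ ⋯ ⊗ H_f. Then for all k ∈ [f], b ∈ {0,…,f−1}, and x_ℓ ∈ {0,…,d_ℓ−1}: U^{(1)} U^{(0)} ( |k⟩_{K₀} ⊗ (1/√f)∑_{ℓ=1}^f ω_f^{bℓ}|ℓ⟩_{K₁} ⊗ |0⟩_{H₀'} ⊗ |0⟩_{H₁'} ⊗ |x₁⟩⋯|x_f⟩ ) = |k⟩_{K₀}|x_k⟩_{H₀'} ⊗ (1/√f)∑_{ℓ=1}^f ω_f^{bℓ}|ℓ⟩_{K₁}|x_ℓ⟩_{H₁'} ⊗ |x₁⟩⋯|x_f⟩; and symmetrically U^{(1)} U^{(0)} ( (1/√f)∑_{ℓ} ω_f^{bℓ}|ℓ⟩_{K₀}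 ⊗ |k⟩_{K₁} ⊗ |0⟩|0⟩ ⊗ |x₁⟩⋯|x_f⟩ ) = (1/√f)∑_{ℓ} ω_f^{bℓ}|ℓ⟩_{K₀}|x_ℓ⟩_{H₀'} ⊗ |k⟩_{K₁}|x_k⟩_{H₁'} ⊗ |x₁⟩⋯|x_f⟩. Consequently the user obtains x_k by measuring the appropriate register, and the honest server's final state on H₁ ⊗ ⋯ ⊗ H_f is |x₁⋯x_f⟩⟨x₁⋯x_f|, independent of k and b. -/
open Matrix

/-- `ω_f = exp(2πi/f)`. -/
noncomputable def omegaC (f : ℕ) : ℂ := Complex.exp (2 * Real.pi * Complex.I / f)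

/-- Index type of the joint system `K₀ ⊗ K₁ ⊗ H₀' ⊗ H₁' ⊗ H₁ ⊗ ⋯ ⊗ H_f` of Protocol 2:
an element `(((k₀,k₁),(j₀,j₁)),x)`. -/
abbrev Jidx (f d : ℕ) (dd : Fin f → ℕ) :=
  ((Fin f × Fin f) × (Fin d × Fin d)) × (∀ ℓ, Fin (dd ℓ))

/-- `U⁽⁰⁾`: the controlled unitary `U = ∑_ℓ |ℓ⟩⟨ℓ| ⊗ U_ℓ` of Protocol 1, with control
`K₀` and target `H₀'`, extended by the identity elsewhere
(`U_ℓ = ∑_{j',j} |j+j' mod d⟩⟨j'| ⊗ |j⟩⟨j|` on `H₀' ⊗ H_ℓ`). -/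
noncomputable def U0 (f d : ℕ) (dd : Fin f → ℕ) : Matrix (Jidx f d dd) (Jidx f d dd) ℂ :=
  Matrix.of fun p q =>
    if p.1.1 = q.1.1 ∧ p.1.2.2 = q.1.2.2 ∧ p.2 = q.2 ∧
        (p.1.2.1 : ℕ) = ((q.2 q.1.1.1 : ℕ) + (q.1.2.1 : ℕ)) % d
    then 1 else 0

/-- `U⁽¹⁾`: the same controlled unitary with control `K₁` and target `H₁'`. -/
noncomputable def U1 (f d : ℕ) (dd : Fin f → ℕ) : Matrix (Jidx f d dd) (Jidx f d dd) ℂ :=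
  Matrix.of fun p q =>
    if p.1.1 = q.1.1 ∧ p.1.2.1 = q.1.2.1 ∧ p.2 = q.2 ∧
        (p.1.2.2 : ℕ) = ((q.2 q.1.1.2 : ℕ) + (q.1.2.2 : ℕ)) % d
    then 1 else 0

lemma omega_mul_conj (f n : ℕ) :
    omegaC f ^ n * (starRingEnd ℂ) (omegaC f ^ n) = 1 := by
  rw [map_pow, ← mul_pow]
  have h : omegaC f * (starRingEnd ℂ) (omegaC f) = 1 := by
    rw [omegaC, ← Complex.exp_conj, ← Complex.exp_add]
    have h2 : (starRingEnd ℂ) (2 * ↑Real.pi * Complex.I / ↑f) =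
        -(2 * ↑Real.pi * Complex.I / ↑f) := by
      simp [map_div₀, Complex.conj_I, Complex.conj_ofReal, map_ofNat]
      ring
    rw [h2, add_neg_cancel, Complex.exp_zero]
  rw [h, one_pow]

section Steps

variable (f d : ℕ) (hd : 0 < d) (dd : Fin f → ℕ) (hdle : ∀ ℓ, dd ℓ ≤ d)
  (k b : Fin f) (x : ∀ ℓ, Fin (dd ℓ))

lemma step0a :
    (U0 f d dd).mulVec
        (fun p => if p.1.1.1 = k ∧ p.1.2.1 = ⟨0, hd⟩ ∧ p.1.2.2 = ⟨0, hd⟩ ∧ p.2 = x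
          then (((Real.sqrt f)⁻¹ : ℝ) : ℂ) * omegaC f ^ ((b : ℕ) * (p.1.1.2 : ℕ)) else 0)
      = (fun p => if p.1.1.1 = k ∧ p.1.2.1 = Fin.castLE (hdle k) (x k) ∧
            p.1.2.2 = ⟨0, hd⟩ ∧ p.2 = x
          then (((Real.sqrt f)⁻¹ : ℝ) : ℂ) * omegaC f ^ ((b : ℕ) * (p.1.1.2 : ℕ)) else 0) := by
  classical
  have hxlt : ∀ ℓ : Fin f, ((x ℓ : ℕ)) < d := fun ℓ => lt_of_lt_of_le (x ℓ).isLt (hdle ℓ)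
  funext p
  simp only [Matrix.mulVec, dotProduct, U0, Matrix.of_apply]
  rw [Finset.sum_eq_single (((p.1.1, (⟨0, hd⟩, ⟨0, hd⟩)), x) : Jidx f d dd)]
  · have hmod : ((x p.1.1.1 : ℕ) + ((⟨0, hd⟩ : Fin d) : ℕ)) % d = (x p.1.1.1 : ℕ) := by
      simp [Nat.mod_eq_of_lt (hxlt _)]
    simp only [hmod]
    by_cases h1 : p.1.1.1 = k
    · subst h1
      split_ifs with hA hB hC hC <;> simp_all [Fin.ext_iff]
    · simp [h1]
  · intro q _ hq
    by_cases hv : q.1.1.1 = k ∧ q.1.2.1 = (⟨0, hd⟩ : Fin d) ∧ q.1.2.2 = (⟨0, hd⟩ : Fin d) ∧ q.2 = x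
    · by_cases hu : p.1.1 = q.1.1 ∧ p.1.2.2 = q.1.2.2 ∧ p.2 = q.2 ∧
          (p.1.2.1 : ℕ) = ((q.2 q.1.1.1 : ℕ) + (q.1.2.1 : ℕ)) % d
      · exact absurd (show q = ((p.1.1, (⟨0, hd⟩, ⟨0, hd⟩)), x) by
          simp [Prod.ext_iff, hv.2.1, hv.2.2.1, hv.2.2.2, hu.1.symm]) hq
      · simp [hu]
    · simp [hv]
  · intro h
    exact absurd (Finset.mem_univ _) h

lemma step1a :
    (U1 f d dd).mulVec
        (fun p => if p.1.1.1 = k ∧ p.1.2.1 = Fin.castLE (hdle k) (x k) ∧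
            p.1.2.2 = ⟨0, hd⟩ ∧ p.2 = x
          then (((Real.sqrt f)⁻¹ : ℝ) : ℂ) * omegaC f ^ ((b : ℕ) * (p.1.1.2 : ℕ)) else 0)
      = (fun p => if p.1.1.1 = k ∧ p.1.2.1 = Fin.castLE (hdle k) (x k) ∧
            p.1.2.2 = Fin.castLE (hdle p.1.1.2) (x p.1.1.2) ∧ p.2 = x
          then (((Real.sqrt f)⁻¹ : ℝ) : ℂ) * omegaC f ^ ((b : ℕ) * (p.1.1.2 : ℕ)) else 0) := by
  classical
  have hxlt : ∀ ℓ : Fin f, ((x ℓ : ℕ)) < d := fun ℓ => lt_of_lt_of_le (x ℓ).isLt (hdle ℓ)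
  funext p
  simp only [Matrix.mulVec, dotProduct, U1, Matrix.of_apply]
  rw [Finset.sum_eq_single (((p.1.1, (Fin.castLE (hdle k) (x k), ⟨0, hd⟩)), x) : Jidx f d dd)]
  · have hmod : ((x p.1.1.2 : ℕ) + ((⟨0, hd⟩ : Fin d) : ℕ)) % d = (x p.1.1.2 : ℕ) := by
      simp [Nat.mod_eq_of_lt (hxlt _)]
    simp only [hmod]
    split_ifs with hA hB hC hC <;> simp_all [Fin.ext_iff]
  · intro q _ hq
    by_cases hv : q.1.1.1 = k ∧ q.1.2.1 = Fin.castLE (hdle k) (x k) ∧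
        q.1.2.2 = (⟨0, hd⟩ : Fin d) ∧ q.2 = x
    · by_cases hu : p.1.1 = q.1.1 ∧ p.1.2.1 = q.1.2.1 ∧ p.2 = q.2 ∧
          (p.1.2.2 : ℕ) = ((q.2 q.1.1.2 : ℕ) + (q.1.2.2 : ℕ)) % d
      · exact absurd (show q = ((p.1.1, (Fin.castLE (hdle k) (x k), ⟨0, hd⟩)), x) by
          simp [Prod.ext_iff, hv.2.1, hv.2.2.1, hv.2.2.2, hu.1.symm]) hq
      · simp [hu]
    · simp [hv]
  · intro h
    exact absurd (Finset.mem_univ _) h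

lemma step0b :
    (U0 f d dd).mulVec
        (fun p => if p.1.1.2 = k ∧ p.1.2.1 = ⟨0, hd⟩ ∧ p.1.2.2 = ⟨0, hd⟩ ∧ p.2 = x
          then (((Real.sqrt f)⁻¹ : ℝ) : ℂ) * omegaC f ^ ((b : ℕ) * (p.1.1.1 : ℕ)) else 0)
      = (fun p => if p.1.1.2 = k ∧ p.1.2.1 = Fin.castLE (hdle p.1.1.1) (x p.1.1.1) ∧
            p.1.2.2 = ⟨0, hd⟩ ∧ p.2 = x
          then (((Real.sqrt f)⁻¹ : ℝ) : ℂ) * omegaC f ^ ((b : ℕ) * (p.1.1.1 : ℕ)) else 0) := by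
  classical
  have hxlt : ∀ ℓ : Fin f, ((x ℓ : ℕ)) < d := fun ℓ => lt_of_lt_of_le (x ℓ).isLt (hdle ℓ)
  funext p
  simp only [Matrix.mulVec, dotProduct, U0, Matrix.of_apply]
  rw [Finset.sum_eq_single (((p.1.1, (⟨0, hd⟩, ⟨0, hd⟩)), x) : Jidx f d dd)]
  · have hmod : ((x p.1.1.1 : ℕ) + ((⟨0, hd⟩ : Fin d) : ℕ)) % d = (x p.1.1.1 : ℕ) := by
      simp [Nat.mod_eq_of_lt (hxlt _)]
    simp only [hmod]
    split_ifs with hA hB hC hC <;> simp_all [Fin.ext_iff]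
  · intro q _ hq
    by_cases hv : q.1.1.2 = k ∧ q.1.2.1 = (⟨0, hd⟩ : Fin d) ∧ q.1.2.2 = (⟨0, hd⟩ : Fin d) ∧ q.2 = x
    · by_cases hu : p.1.1 = q.1.1 ∧ p.1.2.2 = q.1.2.2 ∧ p.2 = q.2 ∧
          (p.1.2.1 : ℕ) = ((q.2 q.1.1.1 : ℕ) + (q.1.2.1 : ℕ)) % d
      · exact absurd (show q = ((p.1.1, (⟨0, hd⟩, ⟨0, hd⟩)), x) by
          simp [Prod.ext_iff, hv.2.1, hv.2.2.1, hv.2.2.2, hu.1.symm]) hq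
      · simp [hu]
    · simp [hv]
  · intro h
    exact absurd (Finset.mem_univ _) h

lemma step1b :
    (U1 f d dd).mulVec
        (fun p => if p.1.1.2 = k ∧ p.1.2.1 = Fin.castLE (hdle p.1.1.1) (x p.1.1.1) ∧
            p.1.2.2 = ⟨0, hd⟩ ∧ p.2 = x
          then (((Real.sqrt f)⁻¹ : ℝ) : ℂ) * omegaC f ^ ((b : ℕ) * (p.1.1.1 : ℕ)) else 0)
      = (fun p => if p.1.1.2 = k ∧ p.1.2.2 = Fin.castLE (hdle k) (x k) ∧
            p.1.2.1 = Fin.castLE (hdle p.1.1.1) (x p.1.1.1) ∧ p.2 = x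
          then (((Real.sqrt f)⁻¹ : ℝ) : ℂ) * omegaC f ^ ((b : ℕ) * (p.1.1.1 : ℕ)) else 0) := by
  classical
  have hxlt : ∀ ℓ : Fin f, ((x ℓ : ℕ)) < d := fun ℓ => lt_of_lt_of_le (x ℓ).isLt (hdle ℓ)
  funext p
  simp only [Matrix.mulVec, dotProduct, U1, Matrix.of_apply]
  rw [Finset.sum_eq_single
      (((p.1.1, (Fin.castLE (hdle p.1.1.1) (x p.1.1.1), ⟨0, hd⟩)), x) : Jidx f d dd)]
  · have hmod : ((x p.1.1.2 : ℕ) + ((⟨0, hd⟩ : Fin d) : ℕ)) % d = (x p.1.1.2 : ℕ) := by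
      simp [Nat.mod_eq_of_lt (hxlt _)]
    simp only [hmod]
    by_cases h1 : p.1.1.2 = k
    · subst h1
      split_ifs with hA hB hC hC <;> simp_all [Fin.ext_iff]
    · simp [h1]
  · intro q _ hq
    by_cases hv : q.1.1.2 = k ∧ q.1.2.1 = Fin.castLE (hdle q.1.1.1) (x q.1.1.1) ∧
        q.1.2.2 = (⟨0, hd⟩ : Fin d) ∧ q.2 = x
    · by_cases hu : p.1.1 = q.1.1 ∧ p.1.2.1 = q.1.2.1 ∧ p.2 = q.2 ∧
          (p.1.2.2 : ℕ) = ((q.2 q.1.1.2 : ℕ) + (q.1.2.2 : ℕ)) % d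
      · refine absurd (show q = ((p.1.1, (Fin.castLE (hdle p.1.1.1) (x p.1.1.1), ⟨0, hd⟩)), x) from ?_) hq
        have h11 : q.1.1 = p.1.1 := hu.1.symm
        have hq1 : q.1.2.1 = Fin.castLE (hdle p.1.1.1) (x p.1.1.1) := by
          rw [hv.2.1]; congr 1 <;> rw [h11]
        simp [Prod.ext_iff, hq1, hv.2.2.1, hv.2.2.2, h11]
      · simp [hu]
    · simp [hv]
  · intro h
    exact absurd (Finset.mem_univ _) h

end Steps

lemma coef_mul_conj (f : ℕ) (hf : 1 ≤ f) (n : ℕ) :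
    ((((Real.sqrt f)⁻¹ : ℝ) : ℂ) * omegaC f ^ n) *
      (starRingEnd ℂ) ((((Real.sqrt f)⁻¹ : ℝ) : ℂ) * omegaC f ^ n) = (f : ℂ)⁻¹ := by
  rw [_root_.map_mul, Complex.conj_ofReal]
  calc ((((Real.sqrt f)⁻¹ : ℝ) : ℂ) * omegaC f ^ n) *
        ((((Real.sqrt f)⁻¹ : ℝ) : ℂ) * (starRingEnd ℂ) (omegaC f ^ n))
      = ((((Real.sqrt f)⁻¹ : ℝ) : ℂ) * (((Real.sqrt f)⁻¹ : ℝ) : ℂ)) *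
        (omegaC f ^ n * (starRingEnd ℂ) (omegaC f ^ n)) := by ring
    _ = (f : ℂ)⁻¹ := by
        rw [omega_mul_conj, mul_one, ← Complex.ofReal_mul, ← mul_inv,
          Real.mul_self_sqrt (by positivity)]
        push_cast
        ring

lemma ptrace1 (f d : ℕ) (hf : 1 ≤ f) (hd : 0 < d)
    (dd : Fin f → ℕ) (hdle : ∀ ℓ, dd ℓ ≤ d) (k b : Fin f) (x : ∀ ℓ, Fin (dd ℓ)) :
    ptraceFst (outerProd
        (fun p : Jidx f d dd => if p.1.1.1 = k ∧ p.1.2.1 = Fin.castLE (hdle k) (x k) ∧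
            p.1.2.2 = Fin.castLE (hdle p.1.1.2) (x p.1.1.2) ∧ p.2 = x
          then (((Real.sqrt f)⁻¹ : ℝ) : ℂ) * omegaC f ^ ((b : ℕ) * (p.1.1.2 : ℕ)) else 0))
      = (Matrix.of fun x₁ x₂ => if x₁ = x ∧ x₂ = x then 1 else 0) := by
  classical
  ext y₁ y₂
  simp only [ptraceFst, outerProd, Matrix.of_apply]
  by_cases hy₁ : y₁ = x
  · by_cases hy₂ : y₂ = x
    · simp only [hy₁, hy₂, and_self, if_true]
      have hmerge : ∀ i : (Fin f × Fin f) × (Fin d × Fin d),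
          (if i.1.1 = k ∧ i.2.1 = Fin.castLE (hdle k) (x k) ∧
              i.2.2 = Fin.castLE (hdle i.1.2) (x i.1.2) ∧ True
            then (((Real.sqrt f)⁻¹ : ℝ) : ℂ) * omegaC f ^ ((b : ℕ) * (i.1.2 : ℕ)) else 0) *
          (starRingEnd ℂ) (if i.1.1 = k ∧ i.2.1 = Fin.castLE (hdle k) (x k) ∧
              i.2.2 = Fin.castLE (hdle i.1.2) (x i.1.2) ∧ True
            then (((Real.sqrt f)⁻¹ : ℝ) : ℂ) * omegaC f ^ ((b : ℕ) * (i.1.2 : ℕ)) else 0)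
          = if i.1.1 = k ∧ i.2.1 = Fin.castLE (hdle k) (x k) ∧
              i.2.2 = Fin.castLE (hdle i.1.2) (x i.1.2) then (f : ℂ)⁻¹ else 0 := by
        intro i
        simp only [eq_self_iff_true, and_true]
        split_ifs with h
        · exact coef_mul_conj f hf _
        · simp
      simp only [hmerge]
      rw [Fintype.sum_prod_type]
      simp only [Fintype.sum_prod_type, ite_and, Finset.sum_ite_irrel, Finset.sum_const_zero,
        Finset.sum_ite_eq, Finset.sum_ite_eq', Finset.mem_univ, if_true, Finset.sum_const,
        Finset.card_univ, Fintype.card_fin, nsmul_eq_mul]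
      have hinner : ∀ a : Fin f,
          (∑ j : Fin d, if j = Fin.castLE (hdle a) (x a) then (f : ℂ)⁻¹ else 0) = (f : ℂ)⁻¹ := by
        intro a
        simp
      rw [Finset.sum_congr rfl fun a _ => hinner a, Finset.sum_const, Finset.card_univ,
        Fintype.card_fin, nsmul_eq_mul, mul_inv_cancel₀ (Nat.cast_ne_zero.mpr (by omega) : (f : ℂ) ≠ 0)]
    · simp [hy₂]
  · simp [hy₁]

lemma ptrace2 (f d : ℕ) (hf : 1 ≤ f) (hd : 0 < d)
    (dd : Fin f → ℕ) (hdle : ∀ ℓ, dd ℓ ≤ d) (k b : Fin f) (x : ∀ ℓ, Fin (dd ℓ)) :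
    ptraceFst (outerProd
        (fun p : Jidx f d dd => if p.1.1.2 = k ∧ p.1.2.2 = Fin.castLE (hdle k) (x k) ∧
            p.1.2.1 = Fin.castLE (hdle p.1.1.1) (x p.1.1.1) ∧ p.2 = x
          then (((Real.sqrt f)⁻¹ : ℝ) : ℂ) * omegaC f ^ ((b : ℕ) * (p.1.1.1 : ℕ)) else 0))
      = (Matrix.of fun x₁ x₂ => if x₁ = x ∧ x₂ = x then 1 else 0) := by
  classical
  ext y₁ y₂
  simp only [ptraceFst, outerProd, Matrix.of_apply]
  by_cases hy₁ : y₁ = x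
  · by_cases hy₂ : y₂ = x
    · simp only [hy₁, hy₂, and_self, if_true]
      have hmerge : ∀ i : (Fin f × Fin f) × (Fin d × Fin d),
          (if i.1.2 = k ∧ i.2.2 = Fin.castLE (hdle k) (x k) ∧
              i.2.1 = Fin.castLE (hdle i.1.1) (x i.1.1) ∧ True
            then (((Real.sqrt f)⁻¹ : ℝ) : ℂ) * omegaC f ^ ((b : ℕ) * (i.1.1 : ℕ)) else 0) *
          (starRingEnd ℂ) (if i.1.2 = k ∧ i.2.2 = Fin.castLE (hdle k) (x k) ∧
              i.2.1 = Fin.castLE (hdle i.1.1) (x i.1.1) ∧ True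
            then (((Real.sqrt f)⁻¹ : ℝ) : ℂ) * omegaC f ^ ((b : ℕ) * (i.1.1 : ℕ)) else 0)
          = if i.1.2 = k ∧ i.2.2 = Fin.castLE (hdle k) (x k) ∧
              i.2.1 = Fin.castLE (hdle i.1.1) (x i.1.1) then (f : ℂ)⁻¹ else 0 := by
        intro i
        simp only [eq_self_iff_true, and_true]
        split_ifs with h
        · exact coef_mul_conj f hf _
        · simp
      simp only [hmerge]
      rw [Fintype.sum_prod_type]
      simp only [Fintype.sum_prod_type, ite_and, Finset.sum_ite_irrel, Finset.sum_const_zero,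
        Finset.sum_ite_eq, Finset.sum_ite_eq', Finset.mem_univ, if_true, Finset.sum_const,
        Finset.card_univ, Fintype.card_fin, nsmul_eq_mul]
      have hinner : ∀ a : Fin f,
          (∑ j : Fin d, if j = Fin.castLE (hdle a) (x a) then (f : ℂ)⁻¹ else 0) = (f : ℂ)⁻¹ := by
        intro a
        simp
      rw [Finset.sum_congr rfl fun a _ => hinner a, Finset.sum_const, Finset.card_univ,
        Fintype.card_fin, nsmul_eq_mul, mul_inv_cancel₀ (Nat.cast_ne_zero.mpr (by omega) : (f : ℂ) ≠ 0)]
    · simp [hy₂]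
  · simp [hy₁]

/-- Correctness and honest-server final-state secrecy of Protocol 2: applying
`U⁽¹⁾U⁽⁰⁾` to `|k⟩_{K₀} ⊗ (1/√f)∑_ℓ ω_f^{bℓ}|ℓ⟩_{K₁} ⊗ |0⟩|0⟩ ⊗ |x₁⟩⋯|x_f⟩` gives
`|k⟩|x_k⟩ ⊗ (1/√f)∑_ℓ ω_f^{bℓ}|ℓ⟩|x_ℓ⟩ ⊗ |x₁⟩⋯|x_f⟩` (and symmetrically with the roles
of `K₀,H₀'` and `K₁,H₁'` exchanged), so the user obtains `x_k`, and the honest server's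
final state on `H₁ ⊗ ⋯ ⊗ H_f` is `|x₁⋯x_f⟩⟨x₁⋯x_f|`, independent of `k` and `b`. -/
theorem protocol2_correct_and_secret (f d : ℕ) (hf : 1 ≤ f) (hd : 0 < d)
    (dd : Fin f → ℕ) (hdd : ∀ ℓ, 0 < dd ℓ) (hdle : ∀ ℓ, dd ℓ ≤ d)
    (k : Fin f) (b : Fin f) (x : ∀ ℓ, Fin (dd ℓ)) :
    (U1 f d dd * U0 f d dd).mulVec
        (fun p => if p.1.1.1 = k ∧ p.1.2.1 = ⟨0, hd⟩ ∧ p.1.2.2 = ⟨0, hd⟩ ∧ p.2 = x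
          then (((Real.sqrt f)⁻¹ : ℝ) : ℂ) * omegaC f ^ ((b : ℕ) * (p.1.1.2 : ℕ)) else 0)
      = (fun p => if p.1.1.1 = k ∧ p.1.2.1 = Fin.castLE (hdle k) (x k) ∧
            p.1.2.2 = Fin.castLE (hdle p.1.1.2) (x p.1.1.2) ∧ p.2 = x
          then (((Real.sqrt f)⁻¹ : ℝ) : ℂ) * omegaC f ^ ((b : ℕ) * (p.1.1.2 : ℕ)) else 0) ∧
    (U1 f d dd * U0 f d dd).mulVec
        (fun p => if p.1.1.2 = k ∧ p.1.2.1 = ⟨0, hd⟩ ∧ p.1.2.2 = ⟨0, hd⟩ ∧ p.2 = x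
          then (((Real.sqrt f)⁻¹ : ℝ) : ℂ) * omegaC f ^ ((b : ℕ) * (p.1.1.1 : ℕ)) else 0)
      = (fun p => if p.1.1.2 = k ∧ p.1.2.2 = Fin.castLE (hdle k) (x k) ∧
            p.1.2.1 = Fin.castLE (hdle p.1.1.1) (x p.1.1.1) ∧ p.2 = x
          then (((Real.sqrt f)⁻¹ : ℝ) : ℂ) * omegaC f ^ ((b : ℕ) * (p.1.1.1 : ℕ)) else 0) ∧
    ptraceFst (outerProd ((U1 f d dd * U0 f d dd).mulVec
        (fun p => if p.1.1.1 = k ∧ p.1.2.1 = ⟨0, hd⟩ ∧ p.1.2.2 = ⟨0, hd⟩ ∧ p.2 = x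
          then (((Real.sqrt f)⁻¹ : ℝ) : ℂ) * omegaC f ^ ((b : ℕ) * (p.1.1.2 : ℕ)) else 0)))
      = (Matrix.of fun x₁ x₂ => if x₁ = x ∧ x₂ = x then 1 else 0) ∧
    ptraceFst (outerProd ((U1 f d dd * U0 f d dd).mulVec
        (fun p => if p.1.1.2 = k ∧ p.1.2.1 = ⟨0, hd⟩ ∧ p.1.2.2 = ⟨0, hd⟩ ∧ p.2 = x
          then (((Real.sqrt f)⁻¹ : ℝ) : ℂ) * omegaC f ^ ((b : ℕ) * (p.1.1.1 : ℕ)) else 0)))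
      = (Matrix.of fun x₁ x₂ => if x₁ = x ∧ x₂ = x then 1 else 0) := by
  
  have e1 : (U1 f d dd * U0 f d dd).mulVec
        (fun p => if p.1.1.1 = k ∧ p.1.2.1 = ⟨0, hd⟩ ∧ p.1.2.2 = ⟨0, hd⟩ ∧ p.2 = x
          then (((Real.sqrt f)⁻¹ : ℝ) : ℂ) * omegaC f ^ ((b : ℕ) * (p.1.1.2 : ℕ)) else 0)
      = (fun p => if p.1.1.1 = k ∧ p.1.2.1 = Fin.castLE (hdle k) (x k) ∧
            p.1.2.2 = Fin.castLE (hdle p.1.1.2) (x p.1.1.2) ∧ p.2 = x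
          then (((Real.sqrt f)⁻¹ : ℝ) : ℂ) * omegaC f ^ ((b : ℕ) * (p.1.1.2 : ℕ)) else 0) := by
    rw [← Matrix.mulVec_mulVec, step0a f d hd dd hdle k b x, step1a f d hd dd hdle k b x]
  have e2 : (U1 f d dd * U0 f d dd).mulVec
        (fun p => if p.1.1.2 = k ∧ p.1.2.1 = ⟨0, hd⟩ ∧ p.1.2.2 = ⟨0, hd⟩ ∧ p.2 = x
          then (((Real.sqrt f)⁻¹ : ℝ) : ℂ) * omegaC f ^ ((b : ℕ) * (p.1.1.1 : ℕ)) else 0)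
      = (fun p => if p.1.1.2 = k ∧ p.1.2.2 = Fin.castLE (hdle k) (x k) ∧
            p.1.2.1 = Fin.castLE (hdle p.1.1.1) (x p.1.1.1) ∧ p.2 = x
          then (((Real.sqrt f)⁻¹ : ℝ) : ℂ) * omegaC f ^ ((b : ℕ) * (p.1.1.1 : ℕ)) else 0) := by
    rw [← Matrix.mulVec_mulVec, step0b f d hd dd hdle k b x, step1b f d hd dd hdle k b x]
  exact ⟨e1, e2, by rw [e1]; exact ptrace1 f d hf hd dd hdle k b x,
    by rw [e2]; exact ptrace2 f d hf hd dd hdle k b x⟩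
end

section
/- (Proposition 1(b).) For any density matrix ρ on ℂ^m ⊗ ℂ^n, subadditivity holds: H(Tr₂ ρ) + H(Tr₁ ρ) ≥ H(ρ); moreover, if ρ = σ ⊗ τ is a tensor (Kronecker) product of density matrices σ on ℂ^m and τ on ℂ^n, then equality holds: H(σ ⊗ τ) = H(σ) + H(τ). -/
open Matrix
open scoped ComplexOrder

/-- Von Neumann entropy `H(ρ) = ∑ᵢ −λᵢ log λᵢ` of a (Hermitian) matrix, where `(λᵢ)` are
its real eigenvalues (and `0 · log 0 = 0`). -/
noncomputable def vnEntropy {n : Type*} [Fintype n] [DecidableEq n]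
    (ρ : Matrix n n ℂ) : ℝ :=
  if h : ρ.IsHermitian then ∑ i, Real.negMulLog (h.eigenvalues i) else 0

/-- Partial trace over the second tensor factor. -/
noncomputable def ptraceSnd {α β : Type*} [Fintype β] (M : Matrix (α × β) (α × β) ℂ) :
    Matrix α α ℂ :=
  Matrix.of fun i j => ∑ k : β, M (i, k) (j, k)

/-!
Diagonalise the marginals, `ptraceSnd ρ = X diag(a) X*` and `ptraceFst ρ = Y diag(b) Y*`, and let
`c` be the diagonal of `ρ` in the product eigenbasis `X ⊗ Y`. Conjugating by the unitary `X ⊗ Y`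
conjugates the partial traces by `X` and `Y`, so `c` is a probability vector on `α × β` with
marginals `a` and `b`. The diagonal of a positive semidefinite matrix is the image of its
eigenvalues under the doubly stochastic matrix `|U_ij|²`, so concavity of `x ↦ -x log x` gives
`H(ρ) ≤ H(c)`, and `H(c) ≤ H(a) + H(b)` is classical subadditivity, i.e. Gibbs' inequality against
the product distribution `a ⊗ b`. For a product state, `X ⊗ Y` diagonalises `σ ⊗ τ` with
eigenvalues `a_k b_l`, and `-x log x` turns these products into sums.
-/

open Real Finset
open scoped Kronecker

theorem Real.negMulLog_le_neg_mul_log_add_sub {c q : ℝ} (hc : 0 ≤ c) (hq : 0 ≤ q)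
    (hqc : q = 0 → c = 0) : negMulLog c ≤ -(c * log q) + (q - c) := by
  rcases hc.eq_or_lt with rfl | hc
  · simpa using hq
  have hq : 0 < q := hq.lt_of_ne fun h ↦ hc.ne' (hqc h.symm)
  calc negMulLog c = -(c * log q) + c * log (q / c) := by
        rw [negMulLog, log_div hq.ne' hc.ne']; ring
    _ ≤ -(c * log q) + c * (q / c - 1) := by gcongr; exact log_le_sub_one_of_pos (by positivity)
    _ = -(c * log q) + (q - c) := by field_simp

theorem Real.sum_negMulLog_le_sum_neg_mul_log {ι : Type*} [Fintype ι] {c q : ι → ℝ}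
    (hc : 0 ≤ c) (hq : 0 ≤ q) (hsum : ∑ i, q i ≤ ∑ i, c i) (hqc : ∀ i, q i = 0 → c i = 0) :
    ∑ i, negMulLog (c i) ≤ ∑ i, -(c i * log (q i)) :=
  calc ∑ i, negMulLog (c i) ≤ ∑ i, (-(c i * log (q i)) + (q i - c i)) :=
        sum_le_sum fun i _ ↦ negMulLog_le_neg_mul_log_add_sub (hc i) (hq i) (hqc i)
    _ ≤ ∑ i, -(c i * log (q i)) := by
        rw [sum_add_distrib, sum_sub_distrib]; linarith

theorem Real.sum_negMulLog_le_add_marginals {α β : Type*} [Fintype α] [Fintype β]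
    {c : α × β → ℝ} (hc : 0 ≤ c) (hc1 : ∑ j, c j = 1) :
    ∑ j, negMulLog (c j) ≤ ∑ k, negMulLog (∑ l, c (k, l)) + ∑ l, negMulLog (∑ k, c (k, l)) := by
  set a := fun k ↦ ∑ l, c (k, l)
  set b := fun l ↦ ∑ k, c (k, l)
  have ha : 0 ≤ a := fun k ↦ sum_nonneg fun l _ ↦ hc (k, l)
  have hb : 0 ≤ b := fun l ↦ sum_nonneg fun k _ ↦ hc (k, l)
  have ha1 : ∑ k, a k = 1 := by rw [← hc1, Fintype.sum_prod_type]
  have hb1 : ∑ l, b l = 1 := by rw [← hc1, Fintype.sum_prod_type_right]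
  have hca (j : α × β) (h : a j.1 = 0) : c j = 0 :=
    (sum_eq_zero_iff_of_nonneg fun l _ ↦ hc (j.1, l)).mp h j.2 (mem_univ _)
  have hcb (j : α × β) (h : b j.2 = 0) : c j = 0 :=
    (sum_eq_zero_iff_of_nonneg fun k _ ↦ hc (k, j.2)).mp h j.1 (mem_univ _)
  have hlog (j : α × β) : c j * log (a j.1 * b j.2) = c j * log (a j.1) + c j * log (b j.2) := by
    by_cases h : c j = 0
    · simp [h]
    rw [log_mul (mt (hca j) h) (mt (hcb j) h), mul_add]
  calc ∑ j, negMulLog (c j) ≤ ∑ j, -(c j * log (a j.1 * b j.2)) :=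
        sum_negMulLog_le_sum_neg_mul_log hc (fun j ↦ mul_nonneg (ha _) (hb _))
          (by rw [Fintype.sum_prod_type, ← Fintype.sum_mul_sum, ha1, hb1, hc1, mul_one])
          fun j h ↦ (mul_eq_zero.mp h).elim (hca j) (hcb j)
    _ = ∑ k, negMulLog (a k) + ∑ l, negMulLog (b l) := by
        simp only [hlog, neg_add, sum_add_distrib, negMulLog, neg_mul]
        rw [Fintype.sum_prod_type, Fintype.sum_prod_type_right]
        simp [a, b, sum_mul]

theorem Real.sum_negMulLog_mul {α β : Type*} [Fintype α] [Fintype β] {a : α → ℝ} {b : β → ℝ}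
    (ha1 : ∑ k, a k = 1) (hb1 : ∑ l, b l = 1) :
    ∑ j : α × β, negMulLog (a j.1 * b j.2) = ∑ k, negMulLog (a k) + ∑ l, negMulLog (b l) := by
  simp only [negMulLog_mul, Fintype.sum_prod_type, sum_add_distrib, ← sum_mul, ← mul_sum, hb1, ha1,
    one_mul]

theorem Matrix.sum_negMulLog_le_sum_negMulLog_mulVec {ι : Type*} [Fintype ι] [DecidableEq ι]
    {T : Matrix ι ι ℝ} (hT : T ∈ doublyStochastic ℝ ι) {p : ι → ℝ} (hp : 0 ≤ p) :
    ∑ i, negMulLog (p i) ≤ ∑ j, negMulLog ((T *ᵥ p) j) := by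
  have jensen (j : ι) : ∑ i, T j i * negMulLog (p i) ≤ negMulLog ((T *ᵥ p) j) := by
    simpa [mulVec, dotProduct] using concaveOn_negMulLog.le_map_sum
      (fun i _ ↦ nonneg_of_mem_doublyStochastic hT) (sum_row_of_mem_doublyStochastic hT j)
      (fun i _ ↦ Set.mem_Ici.mpr (hp i))
  calc ∑ i, negMulLog (p i) = ∑ j, ∑ i, T j i * negMulLog (p i) := by
        rw [sum_comm]
        simp_rw [← sum_mul, sum_col_of_mem_doublyStochastic hT, one_mul]
    _ ≤ _ := sum_le_sum fun j _ ↦ jensen j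

section Spectral

variable {n : Type*} [Fintype n] [DecidableEq n]

theorem vnEntropy_of_isHermitian {A : Matrix n n ℂ} (hA : A.IsHermitian) :
    vnEntropy A = ∑ i, negMulLog (hA.eigenvalues i) :=
  dif_pos hA

theorem Matrix.IsHermitian.sum_eigenvalues_eq_one {𝕜 : Type*} [RCLike 𝕜] {A : Matrix n n 𝕜}
    (hA : A.IsHermitian) (h1 : A.trace = 1) : ∑ i, hA.eigenvalues i = 1 := by
  have := hA.trace_eq_sum_eigenvalues
  rw [h1] at this
  exact_mod_cast this.symm

theorem Matrix.of_norm_sq_mem_doublyStochastic {𝕜 : Type*} [RCLike 𝕜] {U : Matrix n n 𝕜}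
    (hU : U ∈ unitaryGroup n 𝕜) : of (fun i j ↦ ‖U i j‖ ^ 2) ∈ doublyStochastic ℝ n := by
  refine mem_doublyStochastic_iff_sum.mpr ⟨fun i j ↦ sq_nonneg _, fun i ↦ ?_, fun j ↦ ?_⟩
  · have := congr_fun (congr_fun (mem_unitaryGroup_iff.mp hU) i) i
    simp only [mul_apply, star_apply, RCLike.star_def, RCLike.mul_conj, one_apply_eq] at this
    exact_mod_cast this
  · have := congr_fun (congr_fun (mem_unitaryGroup_iff'.mp hU) j) j
    simp only [mul_apply, star_apply, RCLike.star_def, RCLike.conj_mul, one_apply_eq] at this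
    exact_mod_cast this

theorem Matrix.re_diag_mul_diagonal_mul_star {𝕜 : Type*} [RCLike 𝕜] (U : Matrix n n 𝕜)
    (d : n → ℝ) (i : n) :
    RCLike.re ((U * diagonal (RCLike.ofReal ∘ d : n → 𝕜) * star U) i i) =
      (of (fun j k ↦ ‖U j k‖ ^ 2) *ᵥ d) i := by
  rw [mul_apply]
  simp only [mul_diagonal, star_apply, Function.comp_apply, mulVec, dotProduct, of_apply,
    map_sum]
  refine sum_congr rfl fun k _ ↦ ?_
  rw [mul_right_comm, RCLike.star_def, RCLike.mul_conj]
  norm_cast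

theorem Matrix.IsHermitian.star_eigenvectorUnitary_mul_mul {𝕜 : Type*} [RCLike 𝕜]
    {A : Matrix n n 𝕜} (hA : A.IsHermitian) :
    star (hA.eigenvectorUnitary : Matrix n n 𝕜) * A * (hA.eigenvectorUnitary : Matrix n n 𝕜) =
      diagonal (RCLike.ofReal ∘ hA.eigenvalues) := by
  simpa using hA.conjStarAlgAut_star_eigenvectorUnitary

open Polynomial in
theorem Matrix.IsHermitian.map_eigenvalues_eq {𝕜 : Type*} [RCLike 𝕜] {A : Matrix n n 𝕜}
    (hA : A.IsHermitian) {U : Matrix n n 𝕜} (hU : U ∈ unitaryGroup n 𝕜) {d : n → ℝ}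
    (h : A = U * diagonal (RCLike.ofReal ∘ d) * star U) :
    univ.val.map hA.eigenvalues = univ.val.map d := by
  have hchar : A.charpoly = ∏ i, (X - C ((RCLike.ofReal ∘ d) i : 𝕜)) := by
    rw [h, charpoly_mul_comm, ← mul_assoc, mem_unitaryGroup_iff'.mp hU, one_mul,
      charpoly_diagonal]
  have hroots := hA.roots_charpoly_eq_eigenvalues
  rw [hchar, roots_prod _ _ (prod_ne_zero_iff.mpr fun i _ ↦ X_sub_C_ne_zero _)] at hroots
  simp only [roots_X_sub_C, Multiset.bind_singleton, ← Multiset.map_map RCLike.ofReal] at hroots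
  exact (Multiset.map_injective RCLike.ofReal_injective hroots).symm

theorem vnEntropy_eq_of_eq_unitary_conj_diagonal {A U : Matrix n n ℂ}
    (hU : U ∈ unitaryGroup n ℂ) {d : n → ℝ} (h : A = U * diagonal (RCLike.ofReal ∘ d) * star U) :
    vnEntropy A = ∑ i, negMulLog (d i) := by
  have hA : A.IsHermitian := h ▸ isHermitian_mul_mul_conjTranspose U
    (isHermitian_diagonal_iff.mpr fun i ↦ by simp [IsSelfAdjoint])
  have := congrArg (fun s ↦ (s.map negMulLog).sum) (hA.map_eigenvalues_eq hU h)
  simpa only [Multiset.map_map, Function.comp_def, ← sum_eq_multiset_sum,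
    vnEntropy_of_isHermitian hA] using this

theorem vnEntropy_star_mul_mul {A W : Matrix n n ℂ} (hA : A.IsHermitian)
    (hW : W ∈ unitaryGroup n ℂ) : vnEntropy (star W * A * W) = vnEntropy A := by
  set U := hA.eigenvectorUnitary
  have hspec : A = (U : Matrix n n ℂ) * diagonal (RCLike.ofReal ∘ hA.eigenvalues) *
      star (U : Matrix n n ℂ) :=
    hA.spectral_theorem
  rw [vnEntropy_eq_of_eq_unitary_conj_diagonal U.2 hspec,
    vnEntropy_eq_of_eq_unitary_conj_diagonal (mul_mem (Unitary.star_mem hW) U.2)]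
  conv_lhs => rw [hspec]
  simp only [star_mul, star_star, mul_assoc]

theorem Matrix.PosSemidef.vnEntropy_le_sum_negMulLog_diag {A : Matrix n n ℂ} (hA : A.PosSemidef) :
    vnEntropy A ≤ ∑ i, negMulLog (A i i).re := by
  set U := hA.1.eigenvectorUnitary
  have hdiag (i : n) :
      (A i i).re = (of (fun j k ↦ ‖(U : Matrix n n ℂ) j k‖ ^ 2) *ᵥ hA.1.eigenvalues) i :=
    (congrArg (fun M ↦ RCLike.re (M i i)) hA.1.spectral_theorem).trans
      (re_diag_mul_diagonal_mul_star _ _ i)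
  simp only [hdiag, vnEntropy, dif_pos hA.1]
  exact sum_negMulLog_le_sum_negMulLog_mulVec (of_norm_sq_mem_doublyStochastic U.2)
    hA.eigenvalues_nonneg

end Spectral

section PartialTrace

variable {α β : Type*}

theorem isHermitian_ptraceSnd [Fintype β] {M : Matrix (α × β) (α × β) ℂ} (hM : M.IsHermitian) :
    (ptraceSnd M).IsHermitian := by
  ext i j
  simp only [conjTranspose_apply, ptraceSnd, of_apply, star_sum, hM.apply]

theorem isHermitian_ptraceFst [Fintype α] {M : Matrix (α × β) (α × β) ℂ} (hM : M.IsHermitian) :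
    (ptraceFst M).IsHermitian := by
  ext i j
  simp only [conjTranspose_apply, ptraceFst, of_apply, star_sum, hM.apply]

variable [Fintype α] [Fintype β]

theorem ptraceSnd_mul_kronecker_one [DecidableEq β] (M : Matrix (α × β) (α × β) ℂ)
    (A : Matrix α α ℂ) : ptraceSnd (M * (A ⊗ₖ (1 : Matrix β β ℂ))) = ptraceSnd M * A := by
  ext i j
  simp only [ptraceSnd, mul_apply, kroneckerMap_apply, one_apply, mul_ite, mul_one, mul_zero,
    Fintype.sum_prod_type, sum_ite_eq', mem_univ, ↓reduceIte, of_apply, sum_mul]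
  rw [sum_comm]

theorem ptraceSnd_kronecker_mul [DecidableEq α] (A : Matrix α α ℂ) (B : Matrix β β ℂ)
    (M : Matrix (α × β) (α × β) ℂ) :
    ptraceSnd ((A ⊗ₖ B) * M) = A * ptraceSnd (M * ((1 : Matrix α α ℂ) ⊗ₖ B)) := by
  ext i j
  simp only [ptraceSnd, mul_apply, kroneckerMap_apply, Fintype.sum_prod_type, of_apply, one_apply,
    ite_mul, one_mul, zero_mul, mul_ite, mul_zero, sum_ite_irrel, sum_const_zero, sum_ite_eq',
    mem_univ, ↓reduceIte, mul_sum]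
  rw [sum_comm]
  refine sum_congr rfl fun _ _ ↦ ?_
  rw [sum_comm]
  exact sum_congr rfl fun _ _ ↦ sum_congr rfl fun _ _ ↦ by ring

theorem ptraceFst_mul_one_kronecker [DecidableEq α] (M : Matrix (α × β) (α × β) ℂ)
    (B : Matrix β β ℂ) : ptraceFst (M * ((1 : Matrix α α ℂ) ⊗ₖ B)) = ptraceFst M * B := by
  ext i j
  simp only [ptraceFst, mul_apply, kroneckerMap_apply, one_apply, ite_mul, one_mul, zero_mul,
    mul_ite, mul_zero, Fintype.sum_prod_type, sum_ite_irrel, sum_const_zero, sum_ite_eq', mem_univ,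
    ↓reduceIte, of_apply, sum_mul]
  rw [sum_comm]

theorem ptraceFst_kronecker_mul [DecidableEq β] (A : Matrix α α ℂ) (B : Matrix β β ℂ)
    (M : Matrix (α × β) (α × β) ℂ) :
    ptraceFst ((A ⊗ₖ B) * M) = B * ptraceFst (M * (A ⊗ₖ (1 : Matrix β β ℂ))) := by
  ext i j
  simp only [ptraceFst, mul_apply, kroneckerMap_apply, Fintype.sum_prod_type, of_apply, one_apply,
    mul_ite, mul_one, mul_zero, sum_ite_eq', mem_univ, ↓reduceIte, mul_sum]
  conv_rhs => rw [sum_comm]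
  rw [sum_comm]
  refine sum_congr rfl fun _ _ ↦ ?_
  rw [sum_comm]
  exact sum_congr rfl fun _ _ ↦ sum_congr rfl fun _ _ ↦ by ring

variable [DecidableEq α] [DecidableEq β]

theorem ptraceSnd_star_kronecker_mul_mul (X : Matrix α α ℂ) {Y : Matrix β β ℂ}
    (hY : Y ∈ unitaryGroup β ℂ) (M : Matrix (α × β) (α × β) ℂ) :
    ptraceSnd (star (X ⊗ₖ Y) * M * (X ⊗ₖ Y)) = star X * ptraceSnd M * X := by
  rw [star_eq_conjTranspose, conjTranspose_kronecker, mul_assoc, ptraceSnd_kronecker_mul,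
    mul_assoc, ← mul_kronecker_mul, mul_one, ← star_eq_conjTranspose Y,
    mem_unitaryGroup_iff.mp hY, ptraceSnd_mul_kronecker_one, star_eq_conjTranspose, mul_assoc]

theorem ptraceFst_star_kronecker_mul_mul {X : Matrix α α ℂ} (hX : X ∈ unitaryGroup α ℂ)
    (Y : Matrix β β ℂ) (M : Matrix (α × β) (α × β) ℂ) :
    ptraceFst (star (X ⊗ₖ Y) * M * (X ⊗ₖ Y)) = star Y * ptraceFst M * Y := by
  rw [star_eq_conjTranspose, conjTranspose_kronecker, mul_assoc, ptraceFst_kronecker_mul,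
    mul_assoc, ← mul_kronecker_mul, mul_one, ← star_eq_conjTranspose X,
    mem_unitaryGroup_iff.mp hX, ptraceFst_mul_one_kronecker, star_eq_conjTranspose, mul_assoc]

end PartialTrace

section Entropy

variable {α β : Type*} [Fintype α] [Fintype β] [DecidableEq α] [DecidableEq β]

theorem vnEntropy_le_vnEntropy_ptraceSnd_add_vnEntropy_ptraceFst
    {ρ : Matrix (α × β) (α × β) ℂ} (hρ : ρ.PosSemidef) (hρ1 : ρ.trace = 1) :
    vnEntropy ρ ≤ vnEntropy (ptraceSnd ρ) + vnEntropy (ptraceFst ρ) := by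
  have hA := isHermitian_ptraceSnd hρ.1
  have hB := isHermitian_ptraceFst hρ.1
  set X := hA.eigenvectorUnitary
  set Y := hB.eigenvectorUnitary
  set W : Matrix (α × β) (α × β) ℂ := (X : Matrix α α ℂ) ⊗ₖ (Y : Matrix β β ℂ)
  have hW : W ∈ unitaryGroup (α × β) ℂ := kronecker_mem_unitary X.2 Y.2
  have hD : (star W * ρ * W).PosSemidef := hρ.conjTranspose_mul_mul_same W
  set c : α × β → ℝ := fun j ↦ ((star W * ρ * W) j j).re
  have hc : 0 ≤ c := fun j ↦ (Complex.nonneg_iff.mp hD.diag_nonneg).1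
  have hc1 : ∑ j, c j = 1 := by
    simp only [c, ← Complex.re_sum]
    change (trace (star W * ρ * W)).re = 1
    rw [trace_mul_cycle, mem_unitaryGroup_iff.mp hW, one_mul, hρ1, Complex.one_re]
  have hcA (k : α) : ∑ l, c (k, l) = hA.eigenvalues k := by
    have := congrArg (fun M ↦ (M k k).re)
      (ptraceSnd_star_kronecker_mul_mul (X : Matrix α α ℂ) Y.2 ρ)
    rw [hA.star_eigenvectorUnitary_mul_mul] at this
    simpa [ptraceSnd, c] using this
  have hcB (l : β) : ∑ k, c (k, l) = hB.eigenvalues l := by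
    have := congrArg (fun M ↦ (M l l).re)
      (ptraceFst_star_kronecker_mul_mul X.2 (Y : Matrix β β ℂ) ρ)
    rw [hB.star_eigenvectorUnitary_mul_mul] at this
    simpa [ptraceFst, c] using this
  calc vnEntropy ρ = vnEntropy (star W * ρ * W) := (vnEntropy_star_mul_mul hρ.1 hW).symm
    _ ≤ ∑ j, negMulLog (c j) := hD.vnEntropy_le_sum_negMulLog_diag
    _ ≤ ∑ k, negMulLog (∑ l, c (k, l)) + ∑ l, negMulLog (∑ k, c (k, l)) :=
        sum_negMulLog_le_add_marginals hc hc1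
    _ = _ := by simp only [hcA, hcB, vnEntropy_of_isHermitian hA, vnEntropy_of_isHermitian hB]

theorem vnEntropy_kronecker {σ : Matrix α α ℂ} {τ : Matrix β β ℂ} (hσ : σ.IsHermitian)
    (hτ : τ.IsHermitian) (hσ1 : σ.trace = 1) (hτ1 : τ.trace = 1) :
    vnEntropy (σ ⊗ₖ τ) = vnEntropy σ + vnEntropy τ := by
  set X := hσ.eigenvectorUnitary
  set Y := hτ.eigenvectorUnitary
  have hdecomp : σ ⊗ₖ τ = ((X : Matrix α α ℂ) ⊗ₖ (Y : Matrix β β ℂ)) *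
      diagonal (RCLike.ofReal ∘ fun j : α × β ↦ hσ.eigenvalues j.1 * hτ.eigenvalues j.2) *
      star ((X : Matrix α α ℂ) ⊗ₖ (Y : Matrix β β ℂ)) := by
    conv_lhs => rw [hσ.spectral_theorem, hτ.spectral_theorem]
    simp only [Unitary.conjStarAlgAut_apply, mul_kronecker_mul, diagonal_kronecker_diagonal,
      star_eq_conjTranspose, conjTranspose_kronecker]
    congr
    ext j
    simp
  rw [vnEntropy_eq_of_eq_unitary_conj_diagonal (kronecker_mem_unitary X.2 Y.2) hdecomp,
    sum_negMulLog_mul (hσ.sum_eigenvalues_eq_one hσ1) (hτ.sum_eigenvalues_eq_one hτ1),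
    vnEntropy_of_isHermitian hσ, vnEntropy_of_isHermitian hτ]

end Entropy

open Kronecker in
theorem entropy_subadditivity_general (m n : ℕ) :
    (∀ ρ : Matrix (Fin m × Fin n) (Fin m × Fin n) ℂ, ρ.PosSemidef → ρ.trace = 1 →
      vnEntropy (ptraceSnd ρ) + vnEntropy (ptraceFst ρ) ≥ vnEntropy ρ) ∧
    (∀ (σ : Matrix (Fin m) (Fin m) ℂ) (τ : Matrix (Fin n) (Fin n) ℂ),
      σ.PosSemidef → σ.trace = 1 → τ.PosSemidef → τ.trace = 1 →
      vnEntropy (σ ⊗ₖ τ) = vnEntropy σ + vnEntropy τ) :=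
  ⟨fun _ hρ hρ1 ↦ vnEntropy_le_vnEntropy_ptraceSnd_add_vnEntropy_ptraceFst hρ hρ1,
    fun _ _ hσ hσ1 hτ hτ1 ↦ vnEntropy_kronecker hσ.1 hτ.1 hσ1 hτ1⟩

open Kronecker in
/-- Proposition 1(b): subadditivity `H(X) + H(Y) ≥ H(XY)` of the von Neumann entropy for
any density matrix on `ℂ^m ⊗ ℂ^n`, with equality for product states `σ ⊗ τ`. -/
theorem entropy_subadditivity (m n : ℕ) (hm : 0 < m) (hn : 0 < n) :
    (∀ ρ : Matrix (Fin m × Fin n) (Fin m × Fin n) ℂ, ρ.PosSemidef → ρ.trace = 1 →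
      vnEntropy (ptraceSnd ρ) + vnEntropy (ptraceFst ρ) ≥ vnEntropy ρ) ∧
    (∀ (σ : Matrix (Fin m) (Fin m) ℂ) (τ : Matrix (Fin n) (Fin n) ℂ),
      σ.PosSemidef → σ.trace = 1 → τ.PosSemidef → τ.trace = 1 →
      vnEntropy (σ ⊗ₖ τ) = vnEntropy σ + vnEntropy τ) :=
  entropy_subadditivity_general m n
end

section
/- (Theorem 1: optimality of the trivial protocol for one-server Q-QPIR without prior entanglement.) For any r-round one-server quantum private information retrieval protocol for quantum messages, without prior entanglement, for f messages of dimensions d₁,…,d_f — given by the unitary data described in the context and satisfying the correctness condition and the secrecy condition in the final-state criterion under the honest-server model — the communication complexity satisfies CC = ∑_{i=1}^{r} (log q_i + log a_i) ≥ ∑_{ℓ=1}^{f} log d_ℓ, where q_i and a_i are the dimensions of the i-th query and answer systems. -/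
open Matrix

/-- The global state vector after the user's unitary `D⁽ⁱ⁾`, on the systems
`R_{[f]} ⊗ S⁽ⁱ⁾ ⊗ Q⁽ⁱ⁺¹⁾ ⊗ T⁽ⁱ⁺¹⁾`.  The initial state is
`(⊗_ℓ ψ_ℓ) ⊗ |k⟩_{A⁽⁰⁾} ⊗ |0⟩_{T⁽⁰⁾}` (each `ψ_ℓ` a purification on `X_ℓ ⊗ R_ℓ`,
the server's initial system `S⁽⁰⁾ = X₁ ⊗ ⋯ ⊗ X_f` identified via `eS`); then the maps
`D⁽⁰⁾, E⁽¹⁾, D⁽¹⁾, E⁽²⁾, …` are applied alternately, each extended by the identity. -/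
noncomputable def afterD (f : ℕ) (d : Fin f → ℕ) (q a t s : ℕ → ℕ)
    (eS : (∀ ℓ, Fin (d ℓ)) ≃ Fin (s 0))
    (D0 : Matrix (Fin (q 1) × Fin (t 1)) (Fin f × Fin (t 0)) ℂ)
    (Dmat : (i : ℕ) → Matrix (Fin (q (i + 2)) × Fin (t (i + 2)))
      (Fin (a (i + 1)) × Fin (t (i + 1))) ℂ)
    (Emat : (i : ℕ) → Matrix (Fin (a (i + 1)) × Fin (s (i + 1)))
      (Fin (q (i + 1)) × Fin (s i)) ℂ)
    (k : Fin f) (ψ : ∀ ℓ, Fin (d ℓ) × Fin (d ℓ) → ℂ) (t0 : Fin (t 0)) :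
    (i : ℕ) → ((∀ ℓ, Fin (d ℓ)) × Fin (s i) × (Fin (q (i + 1)) × Fin (t (i + 1))) → ℂ)
  | 0 => fun p => ∑ c : Fin f, ∑ u : Fin (t 0),
      D0 (p.2.2.1, p.2.2.2) (c, u) *
        ((if c = k ∧ u = t0 then 1 else 0) * ∏ ℓ, ψ ℓ (eS.symm p.2.1 ℓ, p.1 ℓ))
  | (i + 1) => fun p => ∑ av : Fin (a (i + 1)), ∑ tv : Fin (t (i + 1)),
      Dmat i (p.2.2.1, p.2.2.2) (av, tv) *
        (∑ qv : Fin (q (i + 1)), ∑ sv : Fin (s i),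
          Emat i (av, p.2.1) (qv, sv) *
            afterD f d q a t s eS D0 Dmat Emat k ψ t0 i (p.1, sv, (qv, tv)))

/-- The final global state vector of an `(r+1)`-round protocol, on
`R_{[f]} ⊗ S⁽ʳ⁺¹⁾ ⊗ Y ⊗ E`: the last answer unitary `E⁽ʳ⁺¹⁾` followed by the user's
reconstruction unitary `D⁽ʳ⁺¹⁾ : A⁽ʳ⁺¹⁾ ⊗ T⁽ʳ⁺¹⁾ → Y ⊗ E`. -/
noncomputable def finalVec (f : ℕ) (d : Fin f → ℕ) (r : ℕ) (q a t s : ℕ → ℕ) (DD ee : ℕ)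
    (eS : (∀ ℓ, Fin (d ℓ)) ≃ Fin (s 0))
    (D0 : Matrix (Fin (q 1) × Fin (t 1)) (Fin f × Fin (t 0)) ℂ)
    (Dmat : (i : ℕ) → Matrix (Fin (q (i + 2)) × Fin (t (i + 2)))
      (Fin (a (i + 1)) × Fin (t (i + 1))) ℂ)
    (Emat : (i : ℕ) → Matrix (Fin (a (i + 1)) × Fin (s (i + 1)))
      (Fin (q (i + 1)) × Fin (s i)) ℂ)
    (Dr : Matrix (Fin DD × Fin ee) (Fin (a (r + 1)) × Fin (t (r + 1))) ℂ)
    (k : Fin f) (ψ : ∀ ℓ, Fin (d ℓ) × Fin (d ℓ) → ℂ) (t0 : Fin (t 0)) :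
    (∀ ℓ, Fin (d ℓ)) × Fin (s (r + 1)) × (Fin DD × Fin ee) → ℂ :=
  fun p => ∑ av : Fin (a (r + 1)), ∑ tv : Fin (t (r + 1)),
    Dr (p.2.2.1, p.2.2.2) (av, tv) *
      (∑ qv : Fin (q (r + 1)), ∑ sv : Fin (s r),
        Emat r (av, p.2.1) (qv, sv) *
          afterD f d q a t s eS D0 Dmat Emat k ψ t0 r (p.1, sv, (qv, tv)))

/-- The final marginal (reduced density matrix) on `Y ⊗ R_k`. -/
noncomputable def margYR (f : ℕ) (d : Fin f → ℕ) (r : ℕ) (q a t s : ℕ → ℕ) (DD ee : ℕ)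
    (eS : (∀ ℓ, Fin (d ℓ)) ≃ Fin (s 0))
    (D0 : Matrix (Fin (q 1) × Fin (t 1)) (Fin f × Fin (t 0)) ℂ)
    (Dmat : (i : ℕ) → Matrix (Fin (q (i + 2)) × Fin (t (i + 2)))
      (Fin (a (i + 1)) × Fin (t (i + 1))) ℂ)
    (Emat : (i : ℕ) → Matrix (Fin (a (i + 1)) × Fin (s (i + 1)))
      (Fin (q (i + 1)) × Fin (s i)) ℂ)
    (Dr : Matrix (Fin DD × Fin ee) (Fin (a (r + 1)) × Fin (t (r + 1))) ℂ)
    (k : Fin f) (ψ : ∀ ℓ, Fin (d ℓ) × Fin (d ℓ) → ℂ) (t0 : Fin (t 0)) :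
    Matrix (Fin DD × Fin (d k)) (Fin DD × Fin (d k)) ℂ :=
  Matrix.of fun p₁ p₂ =>
    ∑ sv : Fin (s (r + 1)), ∑ ev : Fin ee,
      ∑ z : ∀ j : {j : Fin f // j ≠ k}, Fin (d j),
        finalVec f d r q a t s DD ee eS D0 Dmat Emat Dr k ψ t0
            ((Equiv.piSplitAt k (fun ℓ => Fin (d ℓ))).symm (p₁.2, z), sv, (p₁.1, ev)) *
        (starRingEnd ℂ) (finalVec f d r q a t s DD ee eS D0 Dmat Emat Dr k ψ t0
            ((Equiv.piSplitAt k (fun ℓ => Fin (d ℓ))).symm (p₂.2, z), sv, (p₂.1, ev)))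

/-- The final marginal (reduced density matrix) on `S⁽ʳ⁺¹⁾ ⊗ R_{[f]}`. -/
noncomputable def margSR (f : ℕ) (d : Fin f → ℕ) (r : ℕ) (q a t s : ℕ → ℕ) (DD ee : ℕ)
    (eS : (∀ ℓ, Fin (d ℓ)) ≃ Fin (s 0))
    (D0 : Matrix (Fin (q 1) × Fin (t 1)) (Fin f × Fin (t 0)) ℂ)
    (Dmat : (i : ℕ) → Matrix (Fin (q (i + 2)) × Fin (t (i + 2)))
      (Fin (a (i + 1)) × Fin (t (i + 1))) ℂ)
    (Emat : (i : ℕ) → Matrix (Fin (a (i + 1)) × Fin (s (i + 1)))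
      (Fin (q (i + 1)) × Fin (s i)) ℂ)
    (Dr : Matrix (Fin DD × Fin ee) (Fin (a (r + 1)) × Fin (t (r + 1))) ℂ)
    (k : Fin f) (ψ : ∀ ℓ, Fin (d ℓ) × Fin (d ℓ) → ℂ) (t0 : Fin (t 0)) :
    Matrix ((∀ ℓ, Fin (d ℓ)) × Fin (s (r + 1))) ((∀ ℓ, Fin (d ℓ)) × Fin (s (r + 1))) ℂ :=
  Matrix.of fun u w =>
    ∑ y : Fin DD, ∑ ev : Fin ee,
      finalVec f d r q a t s DD ee eS D0 Dmat Emat Dr k ψ t0 (u.1, u.2, (y, ev)) *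
      (starRingEnd ℂ) (finalVec f d r q a t s DD ee eS D0 Dmat Emat Dr k ψ t0
        (w.1, w.2, (y, ev)))

/-!
Feed the protocol maximally entangled inputs `ψ_ℓ` and let `ρ` be the final marginal on
`S⁽ʳ⁺¹⁾ ⊗ R_{[f]}`.

Upper bound: across the cut between the server side `R_{[f]} ⊗ S⁽ⁱ⁾` and the user side, the
initial state is a product, every map acts on one side only, and each query or answer moved
across the cut multiplies the Schmidt rank by at most its dimension. So the final state has
Schmidt rank at most `∏ qᵢ aᵢ`, and so does the rank of `ρ`.

Lower bound: correctness for input `k` makes the marginal on `Y ⊗ R_k` the pure state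
`(ι_k ⊗ I) ψ_k`, so the global state is a product across `Y ⊗ R_k | rest`, and
`ρ = I_{R_k} ⊗ B_k`. By secrecy one and the same `ρ` has this form for every `k`, hence
`ρ = I_{R_{[f]}} ⊗ β` with `β ≠ 0`, whose rank is at least `∏ d_ℓ`.
-/

open scoped Kronecker ComplexOrder

theorem Function.apply_eq_of_forall_update {ι β : Type*} [Fintype ι] [DecidableEq ι]
    {X : ι → Type*} {g : (∀ i, X i) → β} (hg : ∀ u i x, g (Function.update u i x) = g u)
    (u w : ∀ i, X i) : g w = g u := by
  have key : ∀ T : Finset ι, g (T.piecewise w u) = g u := by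
    intro T
    induction T using Finset.induction_on with
    | empty => rw [Finset.piecewise_empty]
    | insert i T _ ih => rw [Finset.piecewise_insert, hg, ih]
  simpa using key Finset.univ

theorem Real.sum_log_le_sum_log_add_log_of_prod_le {ι κ : Type*} {s : Finset ι} {t : Finset κ}
    {m : ι → ℕ} {n₁ n₂ : κ → ℕ} (hm : ∀ i ∈ s, m i ≠ 0) (h : ∏ i ∈ s, m i ≤ ∏ j ∈ t, n₁ j * n₂ j) :
    ∑ i ∈ s, Real.log (m i) ≤ ∑ j ∈ t, (Real.log (n₁ j) + Real.log (n₂ j)) := by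
  have hm' : 0 < ∏ i ∈ s, m i := Nat.pos_of_ne_zero (Finset.prod_ne_zero_iff.mpr hm)
  have hn : ∀ j ∈ t, n₁ j ≠ 0 ∧ n₂ j ≠ 0 := fun j hj =>
    mul_ne_zero_iff.mp (Finset.prod_ne_zero_iff.mp (hm'.trans_le h).ne' j hj)
  calc ∑ i ∈ s, Real.log (m i) = Real.log (∏ i ∈ s, (m i : ℝ)) :=
        (Real.log_prod fun i hi => Nat.cast_ne_zero.mpr (hm i hi)).symm
    _ ≤ Real.log (∏ j ∈ t, (n₁ j * n₂ j : ℝ)) :=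
        Real.log_le_log (by exact_mod_cast hm') (by exact_mod_cast h)
    _ = _ := by
        rw [Real.log_prod fun j hj => by simpa using hn j hj]
        exact Finset.sum_congr rfl fun j hj =>
          Real.log_mul (Nat.cast_ne_zero.mpr (hn j hj).1) (Nat.cast_ne_zero.mpr (hn j hj).2)

namespace Matrix

variable {R : Type*} [CommSemiring R] {m n : Type*}

def FactorsThrough (k : ℕ) (M : Matrix m n R) : Prop :=
  ∃ (G : Matrix m (Fin k) R) (H : Matrix (Fin k) n R), M = G * H

theorem FactorsThrough.of_eq_mul {κ : Type*} [Fintype κ] {M : Matrix m n R}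
    (G : Matrix m κ R) (H : Matrix κ n R) (hM : M = G * H) :
    FactorsThrough (Fintype.card κ) M :=
  let e := Fintype.equivFin κ
  ⟨G.submatrix id e.symm, H.submatrix e.symm id, by
    rw [submatrix_mul_equiv, hM, submatrix_id_id]⟩

theorem FactorsThrough.rank_le [StrongRankCondition R] [Fintype n] {k : ℕ} {M : Matrix m n R}
    (hM : FactorsThrough k M) : M.rank ≤ k := by
  obtain ⟨G, H, rfl⟩ := hM
  simpa using (rank_mul_le_right G H).trans (rank_le_card_height H)

/-- One round of the protocol on a state written as a matrix across the server/user cut: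
the server maps `Q ⊗ S` to `A ⊗ S'` by `E`, then the user maps `A ⊗ T` to `W` by `D`. -/
def roundStep {X S S' Q T A W : Type*} [Fintype Q] [Fintype T] [Fintype S] [Fintype A]
    (D : Matrix W (A × T) R) (E : Matrix (A × S') (Q × S) R) (M : Matrix (X × S) (Q × T) R) :
    Matrix (X × S') W R :=
  of fun p w => ∑ av, ∑ tv, D w (av, tv) * ∑ qv, ∑ sv, E (av, p.2) (qv, sv) * M (p.1, sv) (qv, tv)

theorem FactorsThrough.roundStep {X S S' Q T A W : Type*} [Fintype Q] [Fintype T] [Fintype S]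
    [Fintype A] {k : ℕ} {M : Matrix (X × S) (Q × T) R} (hM : FactorsThrough k M)
    (D : Matrix W (A × T) R) (E : Matrix (A × S') (Q × S) R) :
    FactorsThrough (k * (Fintype.card Q * Fintype.card A)) (roundStep D E M) := by
  obtain ⟨G, H, rfl⟩ := hM
  -- the query and the answer crossing the cut join the inner index
  have := FactorsThrough.of_eq_mul (M := Matrix.roundStep D E (G * H))
    (of fun (p : X × S') (c : Fin k × Q × A) => ∑ sv, E (c.2.2, p.2) (c.2.1, sv) * G (p.1, sv) c.1)
    (of fun (c : Fin k × Q × A) w => ∑ tv, D w (c.2.2, tv) * H c.1 (c.2.1, tv)) ?_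
  · simpa [Fintype.card_prod] using this
  ext p w
  simp only [Matrix.roundStep, mul_apply, of_apply, Fintype.sum_prod_type, Finset.mul_sum,
    Finset.sum_mul]
  simp only [← Fintype.sum_prod_type']
  exact Fintype.sum_equiv
    ⟨fun x => (x.2.2.2.2, x.2.2.1, x.1, x.2.1, x.2.2.2.1),
      fun y => (y.2.2.1, y.2.2.2.1, y.2.1, y.2.2.2.2, y.1), fun _ => rfl, fun _ => rfl⟩
    _ _ fun _ => by dsimp only [Equiv.coe_fn_mk]; ring

theorem eq_vecMulVec_of_mul_conjTranspose_eq {K : Type*} [Field K] [PartialOrder K] [StarRing K]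
    [StarOrderedRing K] [Fintype m] [DecidableEq m] [Fintype n] {M : Matrix m n K} {η : m → K}
    (hη : star η ⬝ᵥ η = 1) (hM : M * Mᴴ = vecMulVec η (star η)) :
    M = vecMulVec η (star η ᵥ* M) := by
  set P := vecMulVec η (star η)
  have hP : (1 - P) * P = 0 := by
    rw [sub_mul, one_mul, vecMulVec_mul_vecMulVec, hη, one_smul, sub_self]
  have h : (1 - P) * M * ((1 - P) * M)ᴴ = 0 := by
    rw [conjTranspose_mul, Matrix.mul_assoc, ← Matrix.mul_assoc M, hM, ← Matrix.mul_assoc, hP,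
      Matrix.zero_mul]
  have h0 := trace_mul_conjTranspose_self_eq_zero_iff.mp (by rw [h, trace_zero])
  rw [Matrix.sub_mul, Matrix.one_mul, sub_eq_zero, vecMulVec_mul] at h0
  exact h0

theorem eq_one_kronecker_of_forall_split {ι S K : Type*} [Fintype ι] [DecidableEq ι]
    {X : ι → Type*} [∀ i, DecidableEq (X i)] [MulZeroOneClass K]
    {ρ : Matrix ((∀ i, X i) × S) ((∀ i, X i) × S) K}
    (hρ : ∀ k, ∃ B : Matrix (((j : {j // j ≠ k}) → X j) × S) (((j : {j // j ≠ k}) → X j) × S) K,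
      ∀ u₁ s₁ u₂ s₂, ρ (u₁, s₁) (u₂, s₂) =
        if u₁ k = u₂ k then B (fun j => u₁ j, s₁) (fun j => u₂ j, s₂) else 0)
    (u₀ : ∀ i, X i) :
    ρ = 1 ⊗ₖ of fun s₁ s₂ => ρ (u₀, s₁) (u₀, s₂) := by
  ext ⟨u₁, s₁⟩ ⟨u₂, s₂⟩
  rw [kronecker_apply, of_apply, one_apply]
  by_cases hu : u₁ = u₂
  · subst hu
    rw [if_pos rfl, one_mul]
    refine Function.apply_eq_of_forall_update (g := fun u => ρ (u, s₁) (u, s₂))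
      (fun u i x => ?_) _ _
    obtain ⟨B, hB⟩ := hρ i
    have hrest : (fun j : {j // j ≠ i} => Function.update u i x j) = fun j : {j // j ≠ i} => u j :=
      funext fun j => Function.update_of_ne j.2 x u
    simp only [hB, hrest]
  · obtain ⟨k, hk⟩ := Function.ne_iff.mp hu
    obtain ⟨B, hB⟩ := hρ k
    rw [if_neg hu, zero_mul, hB, if_neg hk]

theorem card_le_rank_one_kronecker {S K : Type*} [Field K] [Fintype n] [DecidableEq n]
    [Fintype S] {β : Matrix S S K} (hβ : β ≠ 0) :
    Fintype.card n ≤ ((1 : Matrix n n K) ⊗ₖ β).rank := by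
  classical
  obtain ⟨s, s', hss'⟩ : ∃ s s', β s s' ≠ 0 := by
    by_contra! h
    exact hβ (Matrix.ext h)
  have hdiag : ((1 : Matrix n n K) ⊗ₖ β).submatrix (fun u => (u, s)) (fun u => (u, s'))
      = diagonal fun _ => β s s' := by
    ext u₁ u₂
    simp [one_apply, diagonal_apply]
  calc Fintype.card n = (diagonal fun _ : n => β s s').rank := by
        simp [rank_diagonal, hss']
    _ ≤ _ := hdiag ▸ rank_submatrix_le _ _ _

theorem card_le_rank_of_forall_split {ι S K : Type*} [Fintype ι] [DecidableEq ι]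
    {X : ι → Type*} [∀ i, Fintype (X i)] [∀ i, DecidableEq (X i)] [Fintype S] [Field K]
    {ρ : Matrix ((∀ i, X i) × S) ((∀ i, X i) × S) K}
    (hρ : ∀ k, ∃ B : Matrix (((j : {j // j ≠ k}) → X j) × S) (((j : {j // j ≠ k}) → X j) × S) K,
      ∀ u₁ s₁ u₂ s₂, ρ (u₁, s₁) (u₂, s₂) =
        if u₁ k = u₂ k then B (fun j => u₁ j, s₁) (fun j => u₂ j, s₂) else 0)
    (hρ0 : ρ ≠ 0) :
    Fintype.card (∀ i, X i) ≤ ρ.rank := by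
  cases isEmpty_or_nonempty (∀ i, X i) with
  | inl _ => simp
  | inr h =>
    have hβ := eq_one_kronecker_of_forall_split hρ h.some
    rw [hβ]
    exact card_le_rank_one_kronecker fun h0 => hρ0 (by rw [hβ, h0, kronecker_zero])

end Matrix

section MaxEntangled

variable {n : ℕ}

noncomputable def maxEntangled (n : ℕ) : Fin n × Fin n → ℂ :=
  fun p => (Real.sqrt n : ℂ)⁻¹ * (1 : Matrix (Fin n) (Fin n) ℂ) p.1 p.2

theorem inv_sqrt_mul_star_inv_sqrt (n : ℕ) :
    (Real.sqrt n : ℂ)⁻¹ * star (Real.sqrt n : ℂ)⁻¹ = (n : ℂ)⁻¹ := by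
  rw [star_inv₀, Complex.star_def, Complex.conj_ofReal, ← mul_inv, ← Complex.ofReal_mul,
    Real.mul_self_sqrt n.cast_nonneg, Complex.ofReal_natCast]

theorem sum_normSq_maxEntangled (hn : 0 < n) : ∑ p, Complex.normSq (maxEntangled n p) = 1 := by
  simp [maxEntangled, one_apply, Fintype.sum_prod_type, apply_ite Complex.normSq,
    Complex.normSq_ofReal, Real.mul_self_sqrt]
  exact mul_inv_cancel₀ (by exact_mod_cast hn.ne')

theorem sum_mul_maxEntangled {Y : Type*} (ι : Matrix Y (Fin n) ℂ) (y : Y) (x : Fin n) :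
    ∑ x₁, ι y x₁ * maxEntangled n (x₁, x) = (Real.sqrt n : ℂ)⁻¹ * ι y x := by
  simp [maxEntangled, one_apply, mul_comm]

variable {Y : Type*} [Fintype Y] {ι : Matrix Y (Fin n) ℂ}

theorem sum_mul_star_of_conjTranspose_mul_self_eq_one (hι : ιᴴ * ι = 1) (x₁ x₂ : Fin n) :
    ∑ y, (Real.sqrt n : ℂ)⁻¹ * ι y x₁ * star ((Real.sqrt n : ℂ)⁻¹ * ι y x₂) =
      if x₁ = x₂ then (n : ℂ)⁻¹ else 0 := by
  have h := congrFun (congrFun hι x₂) x₁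
  rw [mul_apply] at h
  simp only [conjTranspose_apply, one_apply] at h
  calc _ = (Real.sqrt n : ℂ)⁻¹ * star (Real.sqrt n : ℂ)⁻¹ * ∑ y, star (ι y x₂) * ι y x₁ := by
        rw [Finset.mul_sum]
        exact Finset.sum_congr rfl fun _ _ => by rw [star_mul']; ring
    _ = _ := by
        rw [h, inv_sqrt_mul_star_inv_sqrt, mul_ite, mul_one, mul_zero]
        exact if_congr eq_comm rfl rfl

theorem star_dotProduct_of_conjTranspose_mul_self_eq_one (hι : ιᴴ * ι = 1) (hn : 0 < n) :
    star (fun p : Y × Fin n => (Real.sqrt n : ℂ)⁻¹ * ι p.1 p.2) ⬝ᵥ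
      (fun p => (Real.sqrt n : ℂ)⁻¹ * ι p.1 p.2) = 1 := by
  rw [dotProduct, Fintype.sum_prod_type, Finset.sum_comm]
  simp only [Pi.star_apply, mul_comm (star _), sum_mul_star_of_conjTranspose_mul_self_eq_one hι,
    Finset.sum_const, Finset.card_univ, Fintype.card_fin, nsmul_eq_mul]
  exact mul_inv_cancel₀ (by exact_mod_cast hn.ne')

end MaxEntangled

section Protocol

variable (f : ℕ) (d : Fin f → ℕ) (r : ℕ) (q a t s : ℕ → ℕ) (DD ee : ℕ)
  (eS : (∀ ℓ, Fin (d ℓ)) ≃ Fin (s 0))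
  (D0 : Matrix (Fin (q 1) × Fin (t 1)) (Fin f × Fin (t 0)) ℂ)
  (Dmat : (i : ℕ) → Matrix (Fin (q (i + 2)) × Fin (t (i + 2)))
    (Fin (a (i + 1)) × Fin (t (i + 1))) ℂ)
  (Emat : (i : ℕ) → Matrix (Fin (a (i + 1)) × Fin (s (i + 1)))
    (Fin (q (i + 1)) × Fin (s i)) ℂ)
  (Dr : Matrix (Fin DD × Fin ee) (Fin (a (r + 1)) × Fin (t (r + 1))) ℂ)
  (k : Fin f) (ψ : ∀ ℓ, Fin (d ℓ) × Fin (d ℓ) → ℂ) (t0 : Fin (t 0))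

/-- The final state as a matrix across the cut `R_{[f]} ⊗ S⁽ʳ⁺¹⁾ | Y ⊗ E`. -/
noncomputable def cutSR : Matrix ((∀ ℓ, Fin (d ℓ)) × Fin (s (r + 1))) (Fin DD × Fin ee) ℂ :=
  of fun p w => finalVec f d r q a t s DD ee eS D0 Dmat Emat Dr k ψ t0 (p.1, p.2, w)

/-- The final state as a matrix across the cut `Y ⊗ R_k | S⁽ʳ⁺¹⁾ ⊗ E ⊗ R_{[f]∖k}`. -/
noncomputable def cutYR :
    Matrix (Fin DD × Fin (d k)) (Fin (s (r + 1)) × Fin ee × ∀ j : {j // j ≠ k}, Fin (d j)) ℂ :=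
  of fun p w => finalVec f d r q a t s DD ee eS D0 Dmat Emat Dr k ψ t0
    ((Equiv.piSplitAt k (fun ℓ => Fin (d ℓ))).symm (p.2, w.2.2), w.1, (p.1, w.2.1))

variable {f d r q a t s DD ee eS D0 Dmat Emat Dr k ψ t0}

theorem factorsThrough_afterD (i : ℕ) :
    FactorsThrough (∏ j ∈ Finset.range i, q (j + 1) * a (j + 1))
      (of fun p w => afterD f d q a t s eS D0 Dmat Emat k ψ t0 i (p.1, p.2, w) :
        Matrix ((∀ ℓ, Fin (d ℓ)) × Fin (s i)) (Fin (q (i + 1)) × Fin (t (i + 1))) ℂ) := by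
  induction i with
  | zero =>
    simpa using FactorsThrough.of_eq_mul (κ := Unit)
      (of fun p _ => ∏ ℓ, ψ ℓ (eS.symm p.2 ℓ, p.1 ℓ))
      (of fun _ w => ∑ c, ∑ u, D0 w (c, u) * if c = k ∧ u = t0 then 1 else 0) (by
        ext p w
        simp only [afterD, of_apply, mul_apply, Finset.univ_unique, Finset.sum_singleton,
          Finset.mul_sum]
        exact Finset.sum_congr rfl fun _ _ => Finset.sum_congr rfl fun _ _ => by ring)
  | succ i ih =>
    have h := ih.roundStep (Dmat i) (Emat i)
    rw [Fintype.card_fin, Fintype.card_fin, ← Finset.prod_range_succ] at h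
    exact h

theorem factorsThrough_cutSR :
    FactorsThrough (∏ j ∈ Finset.range (r + 1), q (j + 1) * a (j + 1))
      (cutSR f d r q a t s DD ee eS D0 Dmat Emat Dr k ψ t0) := by
  have h := (factorsThrough_afterD (eS := eS) (D0 := D0) (Dmat := Dmat) (Emat := Emat)
    (k := k) (ψ := ψ) (t0 := t0) r).roundStep Dr (Emat r)
  rw [Fintype.card_fin, Fintype.card_fin, ← Finset.prod_range_succ] at h
  exact h

theorem margSR_eq_mul_conjTranspose :
    margSR f d r q a t s DD ee eS D0 Dmat Emat Dr k ψ t0 =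
      cutSR f d r q a t s DD ee eS D0 Dmat Emat Dr k ψ t0 *
        (cutSR f d r q a t s DD ee eS D0 Dmat Emat Dr k ψ t0)ᴴ := by
  ext u w
  simp [margSR, cutSR, mul_apply, Fintype.sum_prod_type]

theorem margYR_eq_mul_conjTranspose :
    margYR f d r q a t s DD ee eS D0 Dmat Emat Dr k ψ t0 =
      cutYR f d r q a t s DD ee eS D0 Dmat Emat Dr k ψ t0 *
        (cutYR f d r q a t s DD ee eS D0 Dmat Emat Dr k ψ t0)ᴴ := by
  ext p₁ p₂
  simp [margYR, cutYR, mul_apply, Fintype.sum_prod_type]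

theorem cutSR_apply (u : ∀ ℓ, Fin (d ℓ)) (sv : Fin (s (r + 1))) (y : Fin DD) (e : Fin ee) :
    cutSR f d r q a t s DD ee eS D0 Dmat Emat Dr k ψ t0 (u, sv) (y, e) =
      cutYR f d r q a t s DD ee eS D0 Dmat Emat Dr k ψ t0 (y, u k) (sv, e, fun j => u j) := by
  simp only [cutSR, cutYR, of_apply]
  rw [show (u k, fun j : {j // j ≠ k} => u j) = Equiv.piSplitAt k (fun ℓ => Fin (d ℓ)) u from rfl,
    Equiv.symm_apply_apply]

theorem rank_margSR_le :
    (margSR f d r q a t s DD ee eS D0 Dmat Emat Dr k ψ t0).rank ≤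
      ∏ j ∈ Finset.range (r + 1), q (j + 1) * a (j + 1) := by
  rw [margSR_eq_mul_conjTranspose, rank_self_mul_conjTranspose]
  exact factorsThrough_cutSR.rank_le

theorem margSR_ne_zero_of_margYR_eq_vecMulVec {η : Fin DD × Fin (d k) → ℂ}
    (hη : star η ⬝ᵥ η = 1)
    (hYR : margYR f d r q a t s DD ee eS D0 Dmat Emat Dr k ψ t0 = vecMulVec η (star η)) :
    margSR f d r q a t s DD ee eS D0 Dmat Emat Dr k ψ t0 ≠ 0 := by
  rw [margSR_eq_mul_conjTranspose]
  intro h0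
  have hSR := trace_mul_conjTranspose_self_eq_zero_iff.mp (by rw [h0, trace_zero])
  have hYR0 : cutYR f d r q a t s DD ee eS D0 Dmat Emat Dr k ψ t0 = 0 := by
    ext p w
    have := congrFun (congrFun hSR
      ((Equiv.piSplitAt k (fun ℓ => Fin (d ℓ))).symm (p.2, w.2.2), w.1)) (p.1, w.2.1)
    rwa [cutSR, of_apply] at this
  rw [margYR_eq_mul_conjTranspose, hYR0, Matrix.zero_mul] at hYR
  apply one_ne_zero (α := ℂ)
  rw [← hη, dotProduct_comm, ← trace_vecMulVec, ← hYR, trace_zero]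

theorem exists_margSR_eq_of_margYR_eq_vecMulVec {η : Fin DD × Fin (d k) → ℂ}
    (hη : star η ⬝ᵥ η = 1)
    (hYR : margYR f d r q a t s DD ee eS D0 Dmat Emat Dr k ψ t0 = vecMulVec η (star η)) :
    ∃ B : Matrix ((∀ j : {j // j ≠ k}, Fin (d j)) × Fin (s (r + 1)))
        ((∀ j : {j // j ≠ k}, Fin (d j)) × Fin (s (r + 1))) ℂ,
      ∀ u₁ s₁ u₂ s₂, margSR f d r q a t s DD ee eS D0 Dmat Emat Dr k ψ t0 (u₁, s₁) (u₂, s₂) =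
        (∑ y, η (y, u₁ k) * star η (y, u₂ k)) * B (fun j => u₁ j, s₁) (fun j => u₂ j, s₂) := by
  rw [margYR_eq_mul_conjTranspose] at hYR
  have hM := eq_vecMulVec_of_mul_conjTranspose_eq hη hYR
  set c := star η ᵥ* cutYR f d r q a t s DD ee eS D0 Dmat Emat Dr k ψ t0
  refine ⟨of fun z₁ z₂ => ∑ e, c (z₁.2, e, z₁.1) * star c (z₂.2, e, z₂.1),
    fun u₁ s₁ u₂ s₂ => ?_⟩
  simp only [margSR_eq_mul_conjTranspose, mul_apply, conjTranspose_apply, Fintype.sum_prod_type,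
    cutSR_apply, hM, vecMulVec_apply, of_apply, Finset.sum_mul_sum, star_mul', Pi.star_apply]
  exact Finset.sum_congr rfl fun _ _ => Finset.sum_congr rfl fun _ _ => by ring

theorem margYR_eq_vecMulVec_of_maxEntangled {ι : Matrix (Fin DD) (Fin (d k)) ℂ}
    (hYR : margYR f d r q a t s DD ee eS D0 Dmat Emat Dr k ψ t0 = of fun p₁ p₂ =>
      (∑ x₁, ι p₁.1 x₁ * maxEntangled (d k) (x₁, p₁.2)) *
        starRingEnd ℂ (∑ x₂, ι p₂.1 x₂ * maxEntangled (d k) (x₂, p₂.2))) :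
    margYR f d r q a t s DD ee eS D0 Dmat Emat Dr k ψ t0 =
      vecMulVec (fun p => (Real.sqrt (d k) : ℂ)⁻¹ * ι p.1 p.2)
        (star fun p => (Real.sqrt (d k) : ℂ)⁻¹ * ι p.1 p.2) := by
  rw [hYR]
  ext p₁ p₂
  simp only [of_apply, vecMulVec_apply, Pi.star_apply, sum_mul_maxEntangled, Complex.star_def]

theorem exists_margSR_eq_ite_of_maxEntangled {ι : Matrix (Fin DD) (Fin (d k)) ℂ}
    (hι : ιᴴ * ι = 1) (hdk : 0 < d k)
    (hYR : margYR f d r q a t s DD ee eS D0 Dmat Emat Dr k ψ t0 = of fun p₁ p₂ =>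
      (∑ x₁, ι p₁.1 x₁ * maxEntangled (d k) (x₁, p₁.2)) *
        starRingEnd ℂ (∑ x₂, ι p₂.1 x₂ * maxEntangled (d k) (x₂, p₂.2))) :
    ∃ B : Matrix ((∀ j : {j // j ≠ k}, Fin (d j)) × Fin (s (r + 1)))
        ((∀ j : {j // j ≠ k}, Fin (d j)) × Fin (s (r + 1))) ℂ,
      ∀ u₁ s₁ u₂ s₂, margSR f d r q a t s DD ee eS D0 Dmat Emat Dr k ψ t0 (u₁, s₁) (u₂, s₂) =
        if u₁ k = u₂ k then B (fun j => u₁ j, s₁) (fun j => u₂ j, s₂) else 0 := by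
  obtain ⟨B, hB⟩ := exists_margSR_eq_of_margYR_eq_vecMulVec
    (star_dotProduct_of_conjTranspose_mul_self_eq_one hι hdk)
    (margYR_eq_vecMulVec_of_maxEntangled hYR)
  refine ⟨(d k : ℂ)⁻¹ • B, fun u₁ s₁ u₂ s₂ => ?_⟩
  rw [hB]
  simp only [Pi.star_apply, sum_mul_star_of_conjTranspose_mul_self_eq_one hι]
  split_ifs <;> simp

end Protocol

theorem trivial_protocol_optimal_general
    (f : ℕ) (hf : 0 < f) (d : Fin f → ℕ) (hd : ∀ ℓ, 0 < d ℓ)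
    (r : ℕ) (q a t s : ℕ → ℕ) (DD ee : ℕ)
    (ht : ∀ i, 0 < t i)
    (eS : (∀ ℓ, Fin (d ℓ)) ≃ Fin (s 0))
    (D0 : Matrix (Fin (q 1) × Fin (t 1)) (Fin f × Fin (t 0)) ℂ)
    (Dmat : (i : ℕ) → Matrix (Fin (q (i + 2)) × Fin (t (i + 2)))
      (Fin (a (i + 1)) × Fin (t (i + 1))) ℂ)
    (Emat : (i : ℕ) → Matrix (Fin (a (i + 1)) × Fin (s (i + 1)))
      (Fin (q (i + 1)) × Fin (s i)) ℂ)
    (Dr : Matrix (Fin DD × Fin ee) (Fin (a (r + 1)) × Fin (t (r + 1))) ℂ)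
    -- the fixed isometries identifying each message space inside `Y`:
    (ι : ∀ ℓ : Fin f, Matrix (Fin DD) (Fin (d ℓ)) ℂ)
    (hι : ∀ ℓ, (ι ℓ)ᴴ * ι ℓ = 1)
    -- correctness: the final marginal on `Y ⊗ R_k` is `(ι_k ⊗ I)|ψ_k⟩⟨ψ_k|(ι_k ⊗ I)†`
    -- for every user input `k` and all purified message inputs `ψ₁,…,ψ_f`:
    (hcorrect : ∀ (k : Fin f) (ψ : ∀ ℓ, Fin (d ℓ) × Fin (d ℓ) → ℂ),
      (∀ ℓ, ∑ p, Complex.normSq (ψ ℓ p) = 1) →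
      margYR f d r q a t s DD ee eS D0 Dmat Emat Dr k ψ ⟨0, ht 0⟩
        = Matrix.of fun p₁ p₂ =>
            (∑ x₁ : Fin (d k), ι k p₁.1 x₁ * ψ k (x₁, p₁.2)) *
            (starRingEnd ℂ) (∑ x₂ : Fin (d k), ι k p₂.1 x₂ * ψ k (x₂, p₂.2)))
    -- secrecy (final-state criterion, honest server): the final marginal on
    -- `S⁽ʳ⁺¹⁾ ⊗ R_{[f]}` does not depend on the user's choice `k`:
    (hsecret : ∀ (ψ : ∀ ℓ, Fin (d ℓ) × Fin (d ℓ) → ℂ),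
      (∀ ℓ, ∑ p, Complex.normSq (ψ ℓ p) = 1) →
      ∀ k k' : Fin f,
        margSR f d r q a t s DD ee eS D0 Dmat Emat Dr k ψ ⟨0, ht 0⟩
          = margSR f d r q a t s DD ee eS D0 Dmat Emat Dr k' ψ ⟨0, ht 0⟩) :
    ∑ i ∈ Finset.range (r + 1), (Real.log (q (i + 1)) + Real.log (a (i + 1)))
      ≥ ∑ ℓ : Fin f, Real.log (d ℓ) := by
  set ψ : ∀ ℓ, Fin (d ℓ) × Fin (d ℓ) → ℂ := fun ℓ => maxEntangled (d ℓ)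
  have hψ : ∀ ℓ, ∑ p, Complex.normSq (ψ ℓ p) = 1 := fun ℓ => sum_normSq_maxEntangled (hd ℓ)
  obtain ⟨ρ, hρk⟩ : ∃ ρ, ∀ k, margSR f d r q a t s DD ee eS D0 Dmat Emat Dr k ψ ⟨0, ht 0⟩ = ρ :=
    ⟨_, fun k => hsecret ψ hψ k ⟨0, hf⟩⟩
  have hsplit : ∀ k, ∃ B : Matrix ((∀ j : {j // j ≠ k}, Fin (d j)) × Fin (s (r + 1)))
      ((∀ j : {j // j ≠ k}, Fin (d j)) × Fin (s (r + 1))) ℂ, ∀ u₁ s₁ u₂ s₂,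
        ρ (u₁, s₁) (u₂, s₂) =
          if u₁ k = u₂ k then B (fun j => u₁ j, s₁) (fun j => u₂ j, s₂) else 0 :=
    fun k => hρk k ▸ exists_margSR_eq_ite_of_maxEntangled (hι k) (hd k) (hcorrect k ψ hψ)
  have hρ0 : ρ ≠ 0 := hρk ⟨0, hf⟩ ▸ margSR_ne_zero_of_margYR_eq_vecMulVec
    (star_dotProduct_of_conjTranspose_mul_self_eq_one (hι _) (hd _))
    (margYR_eq_vecMulVec_of_maxEntangled (hcorrect ⟨0, hf⟩ ψ hψ))
  have hcard : ∏ ℓ, d ℓ ≤ ∏ j ∈ Finset.range (r + 1), q (j + 1) * a (j + 1) :=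
    calc ∏ ℓ, d ℓ = Fintype.card (∀ ℓ, Fin (d ℓ)) := by simp
      _ ≤ ρ.rank := card_le_rank_of_forall_split (X := fun ℓ => Fin (d ℓ)) hsplit hρ0
      _ ≤ _ := hρk ⟨0, hf⟩ ▸ rank_margSR_le
  exact Real.sum_log_le_sum_log_add_log_of_prod_le (fun ℓ _ => (hd ℓ).ne') hcard

/-- Theorem 1: optimality of the trivial protocol for one-server Q-QPIR without prior
entanglement.  For any `(r+1)`-round one-server QPIR protocol for `f` quantum messages of
dimensions `d₁,…,d_f` — given by unitaries `D⁽⁰⁾,…,D⁽ʳ⁺¹⁾` (the user's maps, the last one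
producing the output system `Y = ℂ^DD` with fixed isometries `ι_ℓ : ℂ^{d_ℓ} → ℂ^DD` and a
junk system `E = ℂ^ee`) and `E⁽¹⁾,…,E⁽ʳ⁺¹⁾` (the honest server's maps) — satisfying
correctness and the secrecy condition in the final-state criterion under the
honest-server model, the communication complexity satisfies
`∑_{i=1}^{r+1} (log qᵢ + log aᵢ) ≥ ∑_{ℓ=1}^f log d_ℓ`. -/
theorem trivial_protocol_optimal
    (f : ℕ) (hf : 0 < f) (d : Fin f → ℕ) (hd : ∀ ℓ, 0 < d ℓ)
    (r : ℕ) (q a t s : ℕ → ℕ) (DD ee : ℕ)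
    (hq : ∀ i, 0 < q i) (ha : ∀ i, 0 < a i) (ht : ∀ i, 0 < t i) (hs : ∀ i, 0 < s i)
    (hDD : 0 < DD) (hee : 0 < ee)
    (eS : (∀ ℓ, Fin (d ℓ)) ≃ Fin (s 0))
    (D0 : Matrix (Fin (q 1) × Fin (t 1)) (Fin f × Fin (t 0)) ℂ)
    (Dmat : (i : ℕ) → Matrix (Fin (q (i + 2)) × Fin (t (i + 2)))
      (Fin (a (i + 1)) × Fin (t (i + 1))) ℂ)
    (Emat : (i : ℕ) → Matrix (Fin (a (i + 1)) × Fin (s (i + 1)))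
      (Fin (q (i + 1)) × Fin (s i)) ℂ)
    (Dr : Matrix (Fin DD × Fin ee) (Fin (a (r + 1)) × Fin (t (r + 1))) ℂ)
    -- all the protocol maps are unitary:
    (hD0 : D0 * D0ᴴ = 1 ∧ D0ᴴ * D0 = 1)
    (hDmat : ∀ i < r, Dmat i * (Dmat i)ᴴ = 1 ∧ (Dmat i)ᴴ * Dmat i = 1)
    (hEmat : ∀ i ≤ r, Emat i * (Emat i)ᴴ = 1 ∧ (Emat i)ᴴ * Emat i = 1)
    (hDr : Dr * Drᴴ = 1 ∧ Drᴴ * Dr = 1)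
    -- the fixed isometries identifying each message space inside `Y`:
    (ι : ∀ ℓ : Fin f, Matrix (Fin DD) (Fin (d ℓ)) ℂ)
    (hι : ∀ ℓ, (ι ℓ)ᴴ * ι ℓ = 1)
    -- correctness: the final marginal on `Y ⊗ R_k` is `(ι_k ⊗ I)|ψ_k⟩⟨ψ_k|(ι_k ⊗ I)†`
    -- for every user input `k` and all purified message inputs `ψ₁,…,ψ_f`:
    (hcorrect : ∀ (k : Fin f) (ψ : ∀ ℓ, Fin (d ℓ) × Fin (d ℓ) → ℂ),
      (∀ ℓ, ∑ p, Complex.normSq (ψ ℓ p) = 1) →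
      margYR f d r q a t s DD ee eS D0 Dmat Emat Dr k ψ ⟨0, ht 0⟩
        = Matrix.of fun p₁ p₂ =>
            (∑ x₁ : Fin (d k), ι k p₁.1 x₁ * ψ k (x₁, p₁.2)) *
            (starRingEnd ℂ) (∑ x₂ : Fin (d k), ι k p₂.1 x₂ * ψ k (x₂, p₂.2)))
    -- secrecy (final-state criterion, honest server): the final marginal on
    -- `S⁽ʳ⁺¹⁾ ⊗ R_{[f]}` does not depend on the user's choice `k`:
    (hsecret : ∀ (ψ : ∀ ℓ, Fin (d ℓ) × Fin (d ℓ) → ℂ),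
      (∀ ℓ, ∑ p, Complex.normSq (ψ ℓ p) = 1) →
      ∀ k k' : Fin f,
        margSR f d r q a t s DD ee eS D0 Dmat Emat Dr k ψ ⟨0, ht 0⟩
          = margSR f d r q a t s DD ee eS D0 Dmat Emat Dr k' ψ ⟨0, ht 0⟩) :
    ∑ i ∈ Finset.range (r + 1), (Real.log (q (i + 1)) + Real.log (a (i + 1)))
      ≥ ∑ ℓ : Fin f, Real.log (d ℓ) :=
  trivial_protocol_optimal_general f hf d hd r q a t s DD ee ht eS D0 Dmat Emat Dr ι hι hcorrect
    hsecret
end
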